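/- arXiv:1504.07804 — 4 statements merged into one kernel-verified Lean document; each statement's English description precedes it below -/
import Mathlib

section
/- Let d ≥ 2 be an integer and let v = (v_1, …, v_d) ∈ ℝ^d. There exists a constant C (depending on d and v) such that for every integer M ≥ 1: | Σ_{(k_1,…,k_d) ∈ ℤ_{≥0}^d, k_1+⋯+k_d=M} exp((1/M)·Σ_{j=1}^d k_j v_j) − M^{d−1} · J | ≤ C · M^{d−2}, where J = ∫_{x ∈ ℝ_{≥0}^{d−1}, x_1+⋯+x_{d−1} ≤ 1} exp(Σ_{j=1}^{d−1} x_j v_j + (1 − x_1 − ⋯ − x_{d−1}) v_d) dx (the integral being with respect to (d−1)-dimensional Lebesgue measure on the standard simplex). -/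
/-!
Put `w j = v j - v d` and `g x = exp (x ⬝ᵥ w)` on `ℝ^(d-1)`. Eliminating the last coordinate
`k_d = M - ∑ k_j` turns the sum into `exp (v d)` times the Riemann sum `∑ g (k / M)` over the
lattice points `k` of `M • Δ`, `Δ` the solid simplex, and the integral into
`exp (v d) * ∫_Δ g`. As `g` is exponential-linear, its integral over the grid cell
`k / M + [0, 1 / M)^(d-1)` is exactly `g (k / M) * P / M^(d-1)` with `P = 1 + O(1 / M)`
independent of `k`. The cells of the lattice points cover `Δ` and lie inside
`(1 + (d-1) / M) • Δ`, so their union differs from `Δ` by volume `O(1 / M)`; together with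
`∑ g (k / M) = O(M^(d-1))` this bounds the error by `O(M^(d-2))`.
-/

open MeasureTheory Set Real
open scoped Pointwise

section Simplex

variable {ι : Type*} [Fintype ι]

def solidSimplex (ι : Type*) [Fintype ι] (s : ℝ) : Set (ι → ℝ) :=
  {x | (∀ j, 0 ≤ x j) ∧ ∑ j, x j ≤ s}

lemma le_of_mem_solidSimplex {s : ℝ} {x : ι → ℝ} (hx : x ∈ solidSimplex ι s) (j : ι) :
    x j ≤ s :=
  (Finset.single_le_sum (fun i _ => hx.1 i) (Finset.mem_univ j)).trans hx.2

lemma solidSimplex_mono {s t : ℝ} (hst : s ≤ t) : solidSimplex ι s ⊆ solidSimplex ι t :=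
  fun _ hx => ⟨hx.1, hx.2.trans hst⟩

lemma isCompact_solidSimplex (s : ℝ) : IsCompact (solidSimplex ι s) := by
  refine (isCompact_univ_pi fun _ => isCompact_Icc (a := 0) (b := s)).of_isClosed_subset ?_
    fun x hx j _ => ⟨hx.1 j, le_of_mem_solidSimplex hx j⟩
  simp only [solidSimplex, ofPred_and, ofPred_forall]
  refine (isClosed_iInter fun j =>
    isClosed_le continuous_const (continuous_apply (A := fun _ : ι => ℝ) j)).inter ?_
  exact isClosed_le (continuous_finsetSum _ fun j _ => continuous_apply j) continuous_const

lemma solidSimplex_eq_smul {s : ℝ} (hs : 0 < s) :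
    solidSimplex ι s = s • solidSimplex ι 1 := by
  ext x
  simp only [mem_smul_set_iff_inv_smul_mem₀ hs.ne', solidSimplex, mem_ofPred_eq, Pi.smul_apply,
    smul_eq_mul, ← Finset.mul_sum, inv_mul_le_iff₀ hs, mul_one]
  refine and_congr (forall_congr' fun j => ?_) Iff.rfl
  exact ⟨fun h => mul_nonneg (inv_nonneg.2 hs.le) h,
    fun h => by simpa [hs.ne'] using mul_nonneg hs.le h⟩

lemma volume_solidSimplex {s : ℝ} (hs : 0 < s) :
    volume (solidSimplex ι s)
      = ENNReal.ofReal (s ^ Fintype.card ι) * volume (solidSimplex ι 1) := by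
  rw [solidSimplex_eq_smul hs, Measure.addHaar_smul_of_nonneg _ hs.le,
    Module.finrank_fintype_fun_eq_card]

lemma measureReal_solidSimplex_diff {s : ℝ} (hs : 1 ≤ s) :
    volume.real (solidSimplex ι s \ solidSimplex ι 1)
      = (s ^ Fintype.card ι - 1) * volume.real (solidSimplex ι 1) := by
  rw [measureReal_sdiff (solidSimplex_mono hs) (isCompact_solidSimplex 1).isClosed.measurableSet
    (isCompact_solidSimplex s).measure_ne_top, measureReal_def, volume_solidSimplex (by linarith),
    ENNReal.toReal_mul, ENNReal.toReal_ofReal (by positivity), measureReal_def]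
  ring

lemma dotProduct_le_of_mem_solidSimplex {s : ℝ} {x : ι → ℝ} (hx : x ∈ solidSimplex ι s)
    (u : ι → ℝ) : x ⬝ᵥ u ≤ s * ∑ j, |u j| := by
  rw [Finset.mul_sum]
  refine Finset.sum_le_sum fun j _ => ?_
  calc x j * u j ≤ x j * |u j| := mul_le_mul_of_nonneg_left (le_abs_self _) (hx.1 j)
    _ ≤ s * |u j| := mul_le_mul_of_nonneg_right (le_of_mem_solidSimplex hx j) (abs_nonneg _)

lemma div_mem_solidSimplex {M : ℕ} {k : ι → ℕ} (hk : ∑ j, k j ≤ M) :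
    (fun j => (k j : ℝ) / M) ∈ solidSimplex ι 1 := by
  refine ⟨fun j => by positivity, ?_⟩
  rw [← Finset.sum_div]
  exact div_le_one_of_le₀ (by exact_mod_cast hk) (Nat.cast_nonneg M)

end Simplex

section Grid

variable {ι : Type*}

def gridCell (M : ℕ) (k : ι → ℕ) : Set (ι → ℝ) :=
  univ.pi fun j => Ico ((k j : ℝ) / M) ((k j + 1) / M)

lemma mem_Ico_div_iff_floor_eq {M : ℝ} (hM : 0 < M) {k : ℕ} {t : ℝ} :
    t ∈ Ico (k / M) ((k + 1) / M) ↔ 0 ≤ t ∧ ⌊M * t⌋₊ = k := by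
  rw [mem_Ico, div_le_iff₀ hM, lt_div_iff₀ hM]
  constructor
  · rintro ⟨hlo, hhi⟩
    have ht : 0 ≤ t := nonneg_of_mul_nonneg_left (by linarith [k.cast_nonneg (α := ℝ)]) hM
    exact ⟨ht, (Nat.floor_eq_iff (by positivity)).2 ⟨by linarith, by linarith⟩⟩
  · rintro ⟨ht, hk⟩
    obtain ⟨hlo, hhi⟩ := (Nat.floor_eq_iff (by positivity)).1 hk
    exact ⟨by linarith, by linarith⟩

lemma mem_gridCell_iff {M : ℕ} (hM : 0 < M) {k : ι → ℕ} {x : ι → ℝ} :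
    x ∈ gridCell M k ↔ (∀ j, 0 ≤ x j) ∧ (fun j => ⌊(M : ℝ) * x j⌋₊) = k := by
  simp only [gridCell, mem_univ_pi, mem_Ico_div_iff_floor_eq (Nat.cast_pos.2 hM), funext_iff]
  exact forall_and

lemma pairwise_disjoint_gridCell {M : ℕ} (hM : 0 < M) :
    Pairwise (Function.onFun Disjoint (gridCell (ι := ι) M)) := by
  intro k k' hkk'
  refine disjoint_left.2 fun x hx hx' => hkk' ?_
  exact ((mem_gridCell_iff hM).1 hx).2.symm.trans ((mem_gridCell_iff hM).1 hx').2

variable [Fintype ι] [DecidableEq ι]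

def latticeSimplex (ι : Type*) [Fintype ι] [DecidableEq ι] (M : ℕ) : Finset (ι → ℕ) :=
  {k ∈ Fintype.piFinset fun _ => Finset.range (M + 1) | ∑ j, k j ≤ M}

lemma mem_latticeSimplex {M : ℕ} {k : ι → ℕ} :
    k ∈ latticeSimplex ι M ↔ ∑ j, k j ≤ M := by
  refine ⟨fun hk => (Finset.mem_filter.1 hk).2, fun hk => Finset.mem_filter.2 ⟨?_, hk⟩⟩
  refine Fintype.mem_piFinset.2 fun j => Finset.mem_range_succ_iff.2 ?_
  exact (Finset.single_le_sum (fun i _ => Nat.zero_le (k i)) (Finset.mem_univ j)).trans hk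

lemma solidSimplex_subset_biUnion_gridCell {M : ℕ} (hM : 0 < M) :
    solidSimplex ι 1 ⊆ ⋃ k ∈ latticeSimplex ι M, gridCell M k := by
  intro x hx
  have hM' : (0 : ℝ) < M := Nat.cast_pos.2 hM
  refine mem_biUnion (x := fun j => ⌊(M : ℝ) * x j⌋₊) ?_
    ((mem_gridCell_iff hM).2 ⟨hx.1, rfl⟩)
  rw [Finset.mem_coe, mem_latticeSimplex, ← Nat.cast_le (α := ℝ), Nat.cast_sum]
  calc ∑ j, (⌊(M : ℝ) * x j⌋₊ : ℝ) ≤ ∑ j, (M : ℝ) * x j :=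
        Finset.sum_le_sum fun j _ => Nat.floor_le (mul_nonneg hM'.le (hx.1 j))
    _ ≤ M := by rw [← Finset.mul_sum]; exact mul_le_of_le_one_right hM'.le hx.2

lemma biUnion_gridCell_subset_solidSimplex {M : ℕ} (hM : 0 < M) :
    ⋃ k ∈ latticeSimplex ι M, gridCell M k ⊆ solidSimplex ι (1 + Fintype.card ι / M) := by
  simp only [iUnion_subset_iff, mem_latticeSimplex]
  intro k hk x hx
  have hM' : (0 : ℝ) < M := Nat.cast_pos.2 hM
  refine ⟨fun j => ((mem_gridCell_iff hM).1 hx).1 j, ?_⟩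
  calc ∑ j, x j ≤ ∑ j, ((k j : ℝ) + 1) / M :=
        Finset.sum_le_sum fun j _ => (hx j (mem_univ j)).2.le
    _ = ((∑ j, k j : ℕ) + Fintype.card ι) / M := by
        rw [← Finset.sum_div, Finset.sum_add_distrib]; simp
    _ ≤ (M + Fintype.card ι) / M := by gcongr
    _ = 1 + Fintype.card ι / M := by rw [add_div, div_self hM'.ne']

end Grid

section ExpIntegrals

lemma setIntegral_Ico_add_exp_mul (w a h : ℝ) :
    ∫ t in Ico a (a + h), exp (t * w) = exp (a * w) * ∫ t in Ico 0 h, exp (t * w) := by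
  rcases le_total 0 h with hh | hh
  · have hshift :=
      intervalIntegral.integral_comp_add_right (fun t => exp (t * w)) a (a := 0) (b := h)
    rw [zero_add, add_comm h] at hshift
    rw [integral_Ico_eq_integral_Ioo, ← integral_Ioc_eq_integral_Ioo,
      ← intervalIntegral.integral_of_le (by linarith), ← hshift, integral_Ico_eq_integral_Ioo,
      ← integral_Ioc_eq_integral_Ioo, ← intervalIntegral.integral_of_le hh,
      ← intervalIntegral.integral_const_mul]
    congr 1 with t
    rw [add_mul, exp_add, mul_comm]
  · simp [Ico_eq_empty_of_le hh, Ico_eq_empty_of_le (by linarith : a + h ≤ a)]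

lemma inv_mul_setIntegral_Ico_exp_mul_mem_Icc {h : ℝ} (hh : 0 < h) (w : ℝ) :
    h⁻¹ * ∫ t in Ico 0 h, exp (t * w) ∈ Icc (exp (-(h * |w|))) (exp (h * |w|)) := by
  have habs : ∀ t ∈ Ico 0 h, |t * w| ≤ h * |w| := fun t ht => by
    rw [abs_mul, abs_of_nonneg ht.1]; exact mul_le_mul_of_nonneg_right ht.2.le (abs_nonneg w)
  have hint : IntegrableOn (fun t => exp (t * w)) (Ico 0 h) :=
    (by fun_prop : Continuous fun t => exp (t * w)).integrableOn_Icc.mono_set Ico_subset_Icc_self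
  have hvol : volume (Ico 0 h) < ⊤ := by simp
  rw [mem_Icc, inv_mul_eq_div, le_div_iff₀ hh, div_le_iff₀ hh]
  constructor
  · have := setIntegral_mono_on (integrableOn_const hvol.ne) hint measurableSet_Ico
      fun t ht => exp_le_exp.2 (neg_le_of_abs_le (habs t ht))
    simpa [hh.le, mul_comm] using this
  · have := setIntegral_mono_on hint (integrableOn_const hvol.ne) measurableSet_Ico
      fun t ht => exp_le_exp.2 (le_of_abs_le (habs t ht))
    simpa [hh.le, mul_comm] using this

lemma abs_one_sub_le_mul_exp_of_mem_Icc {a p : ℝ} (hp : p ∈ Icc (exp (-a)) (exp a)) :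
    |1 - p| ≤ a * exp a := by
  obtain ⟨hlo, hhi⟩ := hp
  have ha : 0 ≤ a := by
    by_contra! ha
    linarith [exp_lt_exp.2 (by linarith : a < -a)]
  -- `1 - a ≤ exp (-a)`, multiplied by `exp a`
  have hup : exp a - 1 ≤ a * exp a := by
    have hinv : exp (-a) * exp a = 1 := by rw [← exp_add, neg_add_cancel, exp_zero]
    nlinarith [add_one_le_exp (-a), exp_pos a]
  rw [abs_le]
  constructor <;> nlinarith [add_one_le_exp (-a), one_le_exp ha]

variable {ι : Type*} [Fintype ι]

lemma setIntegral_univ_pi_exp_dotProduct (s : ι → Set ℝ) (u : ι → ℝ) :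
    ∫ x in univ.pi s, exp (x ⬝ᵥ u) = ∏ j, ∫ t in s j, exp (t * u j) := by
  rw [volume_pi, Measure.restrict_pi_pi]
  simp only [dotProduct, exp_sum]
  exact integral_fintype_prod_eq_prod (fun j t => exp (t * u j))

lemma setIntegral_gridCell_exp_dotProduct (M : ℕ) (k : ι → ℕ) (u : ι → ℝ) :
    ∫ x in gridCell M k, exp (x ⬝ᵥ u)
      = exp ((fun j => (k j : ℝ) / M) ⬝ᵥ u)
        * ∏ j, ∫ t in Ico 0 (M : ℝ)⁻¹, exp (t * u j) := by
  have hcell : ∀ j, ((k j : ℝ) + 1) / M = k j / M + (M : ℝ)⁻¹ := fun j => by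
    rw [add_div, one_div]
  simp only [gridCell, hcell]
  rw [setIntegral_univ_pi_exp_dotProduct]
  simp only [setIntegral_Ico_add_exp_mul, Finset.prod_mul_distrib, dotProduct, exp_sum]

lemma abs_one_sub_prod_inv_mul_setIntegral_exp_mul_le {h : ℝ} (hh : 0 < h) (u : ι → ℝ) :
    |1 - ∏ j, h⁻¹ * ∫ t in Ico 0 h, exp (t * u j)|
      ≤ h * (∑ j, |u j|) * exp (h * ∑ j, |u j|) := by
  have hbounds := fun j => inv_mul_setIntegral_Ico_exp_mul_mem_Icc hh (u j)
  refine abs_one_sub_le_mul_exp_of_mem_Icc ⟨?_, ?_⟩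
  · rw [Finset.mul_sum, ← Finset.sum_neg_distrib, exp_sum]
    exact Finset.prod_le_prod (fun j _ => (exp_pos _).le) fun j _ => (hbounds j).1
  · rw [Finset.mul_sum, exp_sum]
    exact Finset.prod_le_prod (fun j _ => (exp_pos _).le.trans (hbounds j).1)
      fun j _ => (hbounds j).2

end ExpIntegrals

lemma one_add_div_pow_sub_one_le (n : ℕ) {M : ℝ} (hM : 1 ≤ M) :
    (1 + n / M) ^ n - 1 ≤ n ^ 2 * (1 + n) ^ (n - 1) / M := by
  have hq : 0 ≤ n / M := div_nonneg (Nat.cast_nonneg n) (by linarith)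
  have h := abs_pow_sub_pow_le (1 + n / M) 1 n
  rw [one_pow, abs_one, add_sub_cancel_left, abs_of_nonneg hq,
    abs_of_pos (by linarith : 0 < 1 + n / M), max_eq_left (by linarith)] at h
  calc _ ≤ n / M * n * (1 + n / M) ^ (n - 1) := (le_abs_self _).trans h
    _ ≤ n / M * n * (1 + n) ^ (n - 1) := by
        gcongr
        exact div_le_self (Nat.cast_nonneg n) hM
    _ = _ := by ring

section RiemannSum

variable {ι : Type*} [Fintype ι] (u : ι → ℝ)

lemma integrableOn_solidSimplex_exp_dotProduct (s : ℝ) :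
    IntegrableOn (fun x => exp (x ⬝ᵥ u)) (solidSimplex ι s) := by
  have : Continuous fun x : ι → ℝ => exp (x ⬝ᵥ u) := by simp only [dotProduct]; fun_prop
  exact this.continuousOn.integrableOn_compact (isCompact_solidSimplex s)

variable [DecidableEq ι]

lemma abs_sum_latticeSimplex_exp_dotProduct_le (M : ℕ) :
    |∑ k ∈ latticeSimplex ι M, exp ((fun j => (k j : ℝ) / M) ⬝ᵥ u)|
      ≤ (M + 1) ^ Fintype.card ι * exp (∑ j, |u j|) := by
  rw [abs_of_pos (Finset.sum_pos (fun _ _ => exp_pos _) ⟨0, by simp [mem_latticeSimplex]⟩)]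
  have hcard : ((latticeSimplex ι M).card : ℝ) ≤ (M + 1) ^ Fintype.card ι := by
    have : (latticeSimplex ι M).card ≤ (M + 1) ^ Fintype.card ι := by
      unfold latticeSimplex
      exact (Finset.card_filter_le _ _).trans_eq (by simp)
    exact_mod_cast this
  calc _ ≤ ∑ _k ∈ latticeSimplex ι M, exp (∑ j, |u j|) := by
        refine Finset.sum_le_sum fun k hk => exp_le_exp.2 ?_
        simpa using dotProduct_le_of_mem_solidSimplex
          (div_mem_solidSimplex (mem_latticeSimplex.1 hk)) u
    _ ≤ _ := by rw [Finset.sum_const, nsmul_eq_mul]; gcongr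

lemma pow_mul_setIntegral_biUnion_gridCell_exp_dotProduct {M : ℕ} (hM : 0 < M) :
    (M : ℝ) ^ Fintype.card ι
        * ∫ x in ⋃ k ∈ latticeSimplex ι M, gridCell M k, exp (x ⬝ᵥ u)
      = (∏ j, (M : ℝ) * ∫ t in Ico 0 (M : ℝ)⁻¹, exp (t * u j))
        * ∑ k ∈ latticeSimplex ι M, exp ((fun j => (k j : ℝ) / M) ⬝ᵥ u) := by
  have hcell :
      ∀ k ∈ latticeSimplex ι M, gridCell M k ⊆ solidSimplex ι (1 + Fintype.card ι / M) :=
    fun k hk => (subset_biUnion_of_mem hk).trans (biUnion_gridCell_subset_solidSimplex hM)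
  rw [integral_biUnion_finset (s := gridCell M) _
      (fun k _ => MeasurableSet.univ_pi fun _ => measurableSet_Ico)
      ((pairwise_disjoint_gridCell hM).set_pairwise _)
      fun k hk => (integrableOn_solidSimplex_exp_dotProduct u _).mono_set (hcell k hk),
    Finset.prod_mul_distrib, Finset.prod_const, Finset.card_univ, Finset.mul_sum, Finset.mul_sum]
  refine Finset.sum_congr rfl fun k _ => ?_
  rw [setIntegral_gridCell_exp_dotProduct]
  ring

lemma abs_setIntegral_biUnion_gridCell_diff_le {M : ℕ} (hM : 0 < M) :
    |∫ x in (⋃ k ∈ latticeSimplex ι M, gridCell M k) \ solidSimplex ι 1, exp (x ⬝ᵥ u)|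
      ≤ exp ((1 + Fintype.card ι) * ∑ j, |u j|) * (Fintype.card ι ^ 2
          * (1 + Fintype.card ι) ^ (Fintype.card ι - 1) * volume.real (solidSimplex ι 1))
        / M := by
  set n := Fintype.card ι
  have hM' : (1 : ℝ) ≤ M := Nat.one_le_cast.2 hM
  have hs : 1 ≤ 1 + n / (M : ℝ) := le_add_of_nonneg_right (by positivity)
  have hsn : 1 + n / (M : ℝ) ≤ 1 + n := by
    have := div_le_self (Nat.cast_nonneg n) hM'
    linarith
  have hsub : (⋃ k ∈ latticeSimplex ι M, gridCell M k) \ solidSimplex ι 1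
      ⊆ solidSimplex ι (1 + n / M) \ solidSimplex ι 1 :=
    sdiff_subset_sdiff_left (biUnion_gridCell_subset_solidSimplex hM)
  have hbound : ∀ x ∈ (⋃ k ∈ latticeSimplex ι M, gridCell M k) \ solidSimplex ι 1,
      ‖exp (x ⬝ᵥ u)‖ ≤ exp ((1 + n) * ∑ j, |u j|) := fun x hx => by
    rw [norm_of_nonneg (exp_pos _).le, exp_le_exp]
    exact dotProduct_le_of_mem_solidSimplex (solidSimplex_mono hsn (hsub hx).1) u
  have hfin : volume (solidSimplex ι (1 + n / M) \ solidSimplex ι 1) < ⊤ :=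
    (measure_mono sdiff_subset).trans_lt (isCompact_solidSimplex _).measure_lt_top
  calc _ ≤ exp ((1 + n) * ∑ j, |u j|)
        * volume.real ((⋃ k ∈ latticeSimplex ι M, gridCell M k) \ solidSimplex ι 1) :=
        norm_setIntegral_le_of_norm_le_const ((measure_mono hsub).trans_lt hfin) hbound
    _ ≤ exp ((1 + n) * ∑ j, |u j|)
        * ((1 + n / M) ^ n - 1) * volume.real (solidSimplex ι 1) := by
        rw [mul_assoc, ← measureReal_solidSimplex_diff hs]
        gcongr
        exact hfin.ne
    _ ≤ exp ((1 + n) * ∑ j, |u j|)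
        * (n ^ 2 * (1 + n) ^ (n - 1) / M) * volume.real (solidSimplex ι 1) := by
        gcongr
        exact one_add_div_pow_sub_one_le n hM'
    _ = _ := by ring

theorem exists_abs_sum_latticeSimplex_sub_integral_le (u : ι → ℝ) :
    ∃ C, ∀ M : ℕ, 0 < M →
      |∑ k ∈ latticeSimplex ι M, exp ((fun j => (k j : ℝ) / M) ⬝ᵥ u)
          - M ^ Fintype.card ι * ∫ x in solidSimplex ι 1, exp (x ⬝ᵥ u)|
        ≤ C * M ^ Fintype.card ι / M := by
  refine ⟨(∑ j, |u j|) * exp (∑ j, |u j|) * (2 ^ Fintype.card ι * exp (∑ j, |u j|))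
    + exp ((1 + Fintype.card ι) * ∑ j, |u j|) * (Fintype.card ι ^ 2
      * (1 + Fintype.card ι) ^ (Fintype.card ι - 1) * volume.real (solidSimplex ι 1)),
    fun M hM => ?_⟩
  have hM' : (1 : ℝ) ≤ M := Nat.one_le_cast.2 hM
  have hUS := pow_mul_setIntegral_biUnion_gridCell_exp_dotProduct u hM
  have hsplit := setIntegral_sdiff (isCompact_solidSimplex 1).isClosed.measurableSet
    ((integrableOn_solidSimplex_exp_dotProduct u _).mono_set
      (biUnion_gridCell_subset_solidSimplex hM)) (solidSimplex_subset_biUnion_gridCell hM)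
  have hP :=
    abs_one_sub_prod_inv_mul_setIntegral_exp_mul_le (inv_pos.2 (by linarith : (0 : ℝ) < M)) u
  have hS := abs_sum_latticeSimplex_exp_dotProduct_le u M
  have hR := abs_setIntegral_biUnion_gridCell_diff_le u hM
  rw [inv_inv] at hP
  set n := Fintype.card ι
  set A := ∑ j, |u j|
  set S := ∑ k ∈ latticeSimplex ι M, exp ((fun j => (k j : ℝ) / M) ⬝ᵥ u)
  set P := ∏ j, (M : ℝ) * ∫ t in Ico 0 (M : ℝ)⁻¹, exp (t * u j)
  set R :=
    ∫ x in (⋃ k ∈ latticeSimplex ι M, gridCell M k) \ solidSimplex ι 1, exp (x ⬝ᵥ u)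
  have hP' : |1 - P| ≤ A * exp A / M := by
    refine hP.trans ?_
    rw [inv_mul_eq_div, div_mul_eq_mul_div]
    gcongr
    exact div_le_self (Finset.sum_nonneg fun j _ => abs_nonneg _) hM'
  have hS' : |S| ≤ 2 ^ n * exp A * M ^ n := by
    calc |S| ≤ (M + 1) ^ n * exp A := hS
      _ ≤ (2 * M) ^ n * exp A := by gcongr; linarith
      _ = _ := by ring
  calc _ = |(1 - P) * S + M ^ n * R| := by
        rw [hsplit, mul_sub, hUS]; ring_nf
    _ ≤ |1 - P| * |S| + M ^ n * |R| := by
        refine (abs_add_le _ _).trans_eq ?_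
        rw [abs_mul, abs_mul, abs_of_nonneg (by positivity : (0 : ℝ) ≤ M ^ n)]
    _ ≤ A * exp A / M * (2 ^ n * exp A * M ^ n) + M ^ n * (exp ((1 + n) * A)
          * (n ^ 2 * (1 + n) ^ (n - 1) * volume.real (solidSimplex ι 1)) / M) := by
        gcongr
    _ = _ := by ring

end RiemannSum

lemma sum_antidiagonalTuple_succ_eq_sum_latticeSimplex {β : Type*} [AddCommMonoid β] (n M : ℕ)
    (f : (Fin (n + 1) → ℕ) → β) :
    ∑ t ∈ Finset.Nat.antidiagonalTuple (n + 1) M, f t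
      = ∑ k ∈ latticeSimplex (Fin n) M, f (Fin.snoc k (M - ∑ j, k j)) := by
  have hsum : ∀ t : Fin (n + 1) → ℕ, ∑ j, Fin.init t j + t (Fin.last n) = ∑ j, t j :=
    fun t => (Fin.sum_univ_castSucc t).symm
  have hinv : ∀ t ∈ Finset.Nat.antidiagonalTuple (n + 1) M,
      Fin.snoc (Fin.init t) (M - ∑ j, Fin.init t j) = t := fun t ht => by
    rw [Finset.Nat.mem_antidiagonalTuple] at ht
    rw [show M - ∑ j, Fin.init t j = t (Fin.last n) by grind, Fin.snoc_init_self]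
  refine Finset.sum_nbij' Fin.init (fun k => Fin.snoc k (M - ∑ j, k j)) (fun t ht => ?_)
    (fun k hk => ?_) hinv (fun k _ => Fin.init_snoc _ _) (fun t ht => by rw [hinv t ht])
  · rw [Finset.Nat.mem_antidiagonalTuple] at ht
    rw [mem_latticeSimplex]
    grind
  · rw [mem_latticeSimplex] at hk
    rw [Finset.Nat.mem_antidiagonalTuple, ← hsum, Fin.init_snoc, Fin.snoc_last]
    omega

lemma sum_mul_castSucc_add_one_sub_sum_mul_last {n : ℕ} (v : Fin (n + 1) → ℝ)
    (x : Fin n → ℝ) :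
    ∑ j, x j * v j.castSucc + (1 - ∑ j, x j) * v (Fin.last n)
      = v (Fin.last n) + x ⬝ᵥ fun j => v j.castSucc - v (Fin.last n) := by
  simp only [dotProduct, mul_sub, Finset.sum_sub_distrib, ← Finset.sum_mul]
  ring

lemma inv_mul_sum_snoc_mul {n M : ℕ} (hM : 0 < M) {k : Fin n → ℕ} (hk : ∑ j, k j ≤ M)
    (v : Fin (n + 1) → ℝ) :
    1 / (M : ℝ) * ∑ j, (Fin.snoc (α := fun _ => ℕ) k (M - ∑ i, k i) j : ℝ) * v j
      = ∑ j, (k j : ℝ) / M * v j.castSucc + (1 - ∑ j, (k j : ℝ) / M) * v (Fin.last n) := by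
  have hM' : (M : ℝ) ≠ 0 := Nat.cast_ne_zero.2 hM.ne'
  rw [Fin.sum_univ_castSucc]
  simp only [Fin.snoc_castSucc, Fin.snoc_last, Nat.cast_sub hk, Nat.cast_sum, div_mul_eq_mul_div,
    ← Finset.sum_div]
  field_simp

theorem geometric_sum_asymptotics (d : ℕ) (hd : 2 ≤ d) (v : Fin d → ℝ) :
    ∃ C : ℝ, ∀ M : ℕ, 1 ≤ M →
      |(∑ t ∈ Finset.Nat.antidiagonalTuple d M,
            Real.exp ((1 / (M : ℝ)) * ∑ j, (t j : ℝ) * v j))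
          - (M : ℝ) ^ (d - 1) *
              ∫ x in {x : Fin (d - 1) → ℝ | (∀ j, 0 ≤ x j) ∧ ∑ j, x j ≤ 1},
                Real.exp ((∑ j, x j * v (Fin.castLE (Nat.sub_le d 1) j))
                  + (1 - ∑ j, x j) * v ⟨d - 1, by omega⟩)|
        ≤ C * (M : ℝ) ^ (d - 2) := by
  obtain ⟨m, rfl⟩ : ∃ m, d = m + 2 := ⟨d - 2, by omega⟩
  set w : Fin (m + 1) → ℝ := fun j => v j.castSucc - v (Fin.last (m + 1))
  obtain ⟨C, hC⟩ := exists_abs_sum_latticeSimplex_sub_integral_le w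
  refine ⟨exp (v (Fin.last (m + 1))) * C, fun M hM => ?_⟩
  have hsum : ∑ t ∈ Finset.Nat.antidiagonalTuple (m + 2) M,
        exp (1 / (M : ℝ) * ∑ j, (t j : ℝ) * v j)
      = exp (v (Fin.last (m + 1)))
        * ∑ k ∈ latticeSimplex (Fin (m + 1)) M, exp ((fun j => (k j : ℝ) / M) ⬝ᵥ w) := by
    rw [sum_antidiagonalTuple_succ_eq_sum_latticeSimplex, Finset.mul_sum]
    refine Finset.sum_congr rfl fun k hk => ?_
    rw [inv_mul_sum_snoc_mul hM (mem_latticeSimplex.1 hk),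
      sum_mul_castSucc_add_one_sub_sum_mul_last, exp_add]
  have hint : ∫ x in solidSimplex (Fin (m + 1)) 1,
        exp (∑ j, x j * v j.castSucc + (1 - ∑ j, x j) * v (Fin.last (m + 1)))
      = exp (v (Fin.last (m + 1))) * ∫ x in solidSimplex (Fin (m + 1)) 1, exp (x ⬝ᵥ w) := by
    simp only [sum_mul_castSucc_add_one_sub_sum_mul_last, exp_add, integral_const_mul, w]
  have hC' := hC M hM
  rw [Fintype.card_fin, pow_succ, mul_div_assoc, mul_div_cancel_right₀ _ (by positivity)] at hC'
  -- `m + 2 - 1` is `m + 1` definitionally, and then `Fin.castLE _ j` is `j.castSucc`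
  change |_ - (M : ℝ) ^ (m + 1) * ∫ x in solidSimplex (Fin (m + 1)) 1,
    exp (∑ j, x j * v j.castSucc + (1 - ∑ j, x j) * v (Fin.last (m + 1)))| ≤ _ * (M : ℝ) ^ m
  rw [hsum, hint, mul_left_comm, ← mul_sub, abs_mul, abs_of_pos (exp_pos _), mul_assoc]
  exact mul_le_mul_of_nonneg_left hC' (exp_pos _).le
end

section
/- Let q be a prime power, F_q a finite field with q elements, and let k ≥ 1, n ≥ 2, h be integers with 0 ≤ h ≤ n−2 and k(h+1) > (k−1)n. Then for every monic polynomial A of degree n in F_q[t], Σ_{f ∈ I(A;h)} d_k(f) = q^{h+1} · C(n+k−1, k−1). In particular the remainder Δ_k(A;h) := N_{d_k}(A;h) − q^{h+1}·C(n+k−1,k−1) vanishes identically in this range. -/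
open Polynomial

/-- The `k`-th divisor function of a polynomial: the number of `k`-tuples of monic
polynomials whose product is `f`. -/
noncomputable def dpoly (F : Type) [Field F] (k : ℕ) (f : Polynomial F) : ℕ :=
  Set.ncard {t : Fin k → Polynomial F | (∀ i, (t i).Monic) ∧ ∏ i, t i = f}

/-- The monic polynomial `X^n + ∑_{i<n} aᵢ X^i`; as `a` ranges over `Fin n → F`, this
ranges bijectively over all monic polynomials of degree `n`. -/
noncomputable def monicOf (F : Type) [Field F] (n : ℕ) (a : Fin n → F) : Polynomial F :=
  Polynomial.X ^ n + ∑ i : Fin n, Polynomial.C (a i) * Polynomial.X ^ (i : ℕ)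

/-- The sum `N_{d_k}(A;h) = ∑_{f ∈ I(A;h)} d_k(f)` of the `k`-th divisor function over the
short interval `I(A;h) = {f : deg(f - A) ≤ h}`, parametrized as `f = A + ∑_{i ≤ h} gᵢ X^i`. -/
noncomputable def Nshort (F : Type) [Field F] [Fintype F] (k h : ℕ) (A : Polynomial F) : ℕ :=
  ∑ g : Fin (h + 1) → F,
    dpoly F k (A + ∑ i : Fin (h + 1), Polynomial.C (g i) * Polynomial.X ^ (i : ℕ))

/-!
Group the factorizations `f = f₁ ⋯ f_k` of the `f ∈ I(A;h)` by their degree vector `d`,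
`∑ dᵢ = n`. As `k (n - h - 1) < n`, some `d_{i₀}` exceeds `n - h - 1`, so the cofactor
`G = ∏_{j ≠ i₀} f_j` has degree `e ≤ h`. Writing `A = Q G + R` with `deg R < e`, the
condition `deg (f_{i₀} G - A) ≤ h` says exactly `deg (f_{i₀} - Q) ≤ h - e`. Hence each of
the `q^e` choices of the other factors leaves `q^(h + 1 - e)` choices of `f_{i₀}`: every
degree vector contributes `q^(h + 1)`, and there are `C(n + k - 1, k - 1)` degree vectors.
-/

lemma Nat.card_eq_card_mul_of_card_fiber_eq {α β : Type*} [Finite β] (f : α → β) {c : ℕ}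
    (hc : c ≠ 0) (h : ∀ b, Nat.card {a // f a = b} = c) : Nat.card α = Nat.card β * c := by
  have := Fintype.ofFinite β
  have (b : β) : Finite {a // f a = b} := Nat.finite_of_card_ne_zero (h b ▸ hc)
  rw [← Nat.card_congr (Equiv.sigmaFiberEquiv f), Nat.card_sigma,
    Finset.sum_congr rfl fun b _ => h b, Finset.sum_const, Finset.card_univ, smul_eq_mul,
    Nat.card_eq_fintype_card]

lemma Nat.card_subtype_sum_eq_choose (ι : Type*) [Fintype ι] [DecidableEq ι] (n : ℕ) :
    Nat.card {d : ι → ℕ // ∑ i, d i = n} = (Fintype.card ι + n - 1).choose n := by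
  rw [← Nat.card_congr (Sym.equivNatSumOfFintype ι n), Nat.card_eq_fintype_card,
    Sym.card_sym_eq_choose]

namespace Polynomial

section Semiring

variable {R : Type*} [Semiring R]

lemma eq_sum_C_mul_X_pow_iff {p : R[X]} {m : ℕ} (g : Fin m → R) :
    p = ∑ i, C (g i) * X ^ (i : ℕ) ↔
      p ∈ degreeLT R m ∧ ∀ i : Fin m, p.coeff i = g i := by
  have hsum : ∑ i, C (g i) * X ^ (i : ℕ) = ((degreeLTEquiv R m).symm g : R[X]) := by
    simp [degreeLTEquiv, C_mul_X_pow_eq_monomial]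
  rw [hsum]
  refine ⟨?_, fun ⟨hp, hcoeff⟩ => ?_⟩
  · rintro rfl
    exact ⟨Submodule.coe_mem _, congrFun ((degreeLTEquiv R m).apply_symm_apply g)⟩
  · rw [← show degreeLTEquiv R m ⟨p, hp⟩ = g by ext i; exact hcoeff i,
      LinearEquiv.symm_apply_apply]

lemma card_degreeLT [Fintype R] (n : ℕ) : Nat.card (degreeLT R n) = Fintype.card R ^ n := by
  rw [Nat.card_congr (degreeLTEquiv R n).toEquiv, Nat.card_fun, Nat.card_eq_fintype_card,
    Nat.card_eq_fintype_card, Fintype.card_fin]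

end Semiring

variable {R : Type*} [CommRing R]

-- For `m = h + 1` these are the `k`-tuples counted by `N_{d_k}(A;h)`.
def shortIntervalFactorizations (ι : Type*) [Fintype ι] (m : ℕ) (A : R[X]) :
    Set (ι → R[X]) :=
  {t | (∀ i, (t i).Monic) ∧ ∏ i, t i - A ∈ degreeLT R m}

variable [Nontrivial R]

lemma monic_and_natDegree_eq_of_sub_mem_degreeLT {A p : R[X]} {m : ℕ} (hA : A.Monic)
    (hm : m ≤ A.natDegree) (hp : p - A ∈ degreeLT R m) :
    p.Monic ∧ p.natDegree = A.natDegree := by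
  have hlt : (p - A).degree < A.degree := by
    rw [degree_eq_natDegree hA.ne_zero]
    exact (mem_degreeLT.1 hp).trans_le (by exact_mod_cast hm)
  rw [← add_sub_cancel A p]
  exact ⟨hA.add_of_left hlt, natDegree_add_eq_left_of_degree_lt hlt⟩

lemma monic_and_natDegree_eq_of_mul_sub_mem_degreeLT {A G f : R[X]} {m : ℕ} (hA : A.Monic)
    (hm : m ≤ A.natDegree) (hG : G.Monic) (hf : f * G - A ∈ degreeLT R m) :
    f.Monic ∧ f.natDegree + G.natDegree = A.natDegree := by
  obtain ⟨hmonic, hdeg⟩ := monic_and_natDegree_eq_of_sub_mem_degreeLT hA hm hf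
  have hf := hG.of_mul_monic_right hmonic
  exact ⟨hf, hf.natDegree_mul hG ▸ hdeg⟩

lemma mul_monic_mem_degreeLT_iff {G p : R[X]} {m : ℕ} (hG : G.Monic) (hm : G.natDegree ≤ m) :
    p * G ∈ degreeLT R m ↔ p ∈ degreeLT R (m - G.natDegree) := by
  rcases eq_or_ne p 0 with rfl | hp
  · simp only [zero_mul, Submodule.zero_mem]
  rw [mem_degreeLT, mem_degreeLT, hG.degree_mul, degree_eq_natDegree hG.ne_zero,
    degree_eq_natDegree hp, ← Nat.cast_add, Nat.cast_lt, Nat.cast_lt]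
  omega

lemma mul_sub_mem_degreeLT_iff {A G f : R[X]} {m : ℕ} (hG : G.Monic) (hm : G.natDegree ≤ m) :
    f * G - A ∈ degreeLT R m ↔ f - A /ₘ G ∈ degreeLT R (m - G.natDegree) := by
  have hmod : A %ₘ G ∈ degreeLT R m := mem_degreeLT.2 <| (degree_modByMonic_lt A hG).trans_le <|
    (degree_eq_natDegree hG.ne_zero).trans_le (by exact_mod_cast hm)
  have hsplit : f * G - A = (f - A /ₘ G) * G - A %ₘ G := by
    conv_lhs => rw [← modByMonic_add_div A G]
    ring
  rw [hsplit, Submodule.sub_mem_iff_left _ hmod, mul_monic_mem_degreeLT_iff hG hm]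

noncomputable def mulSubMemDegreeLTEquiv {X : Type*} (Q : X → Prop) (G : X → R[X]) {e m : ℕ}
    (hG : ∀ x, Q x → (G x).Monic ∧ (G x).natDegree = e) (he : e ≤ m) (A : R[X]) :
    {y : X × R[X] // Q y.1 ∧ y.2 * G y.1 - A ∈ degreeLT R m} ≃
      {x // Q x} × degreeLT R (m - e) where
  toFun y := (⟨y.1.1, y.2.1⟩, ⟨y.1.2 - A /ₘ G y.1.1, by
    obtain ⟨hmonic, hdeg⟩ := hG _ y.2.1
    rw [← hdeg, ← mul_sub_mem_degreeLT_iff hmonic (hdeg.trans_le he)]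
    exact y.2.2⟩)
  invFun z := ⟨(z.1.1, A /ₘ G z.1.1 + z.2), z.1.2, by
    obtain ⟨hmonic, hdeg⟩ := hG _ z.1.2
    rw [mul_sub_mem_degreeLT_iff hmonic (hdeg.trans_le he), add_sub_cancel_left, hdeg]
    exact z.2.2⟩
  left_inv y := by ext <;> simp
  right_inv z := by ext <;> simp

variable [Fintype R]

lemma card_monic_natDegree_eq (n : ℕ) :
    Nat.card {p : R[X] // p.Monic ∧ p.natDegree = n} = Fintype.card R ^ n := by
  rw [Nat.card_congr (monicEquivDegreeLT n), card_degreeLT]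

lemma card_pi_monic_natDegree_eq {ι : Type*} [Fintype ι] (d : ι → ℕ) :
    Nat.card {t : ι → R[X] // ∀ i, (t i).Monic ∧ (t i).natDegree = d i} =
      Fintype.card R ^ ∑ i, d i := by
  rw [Nat.card_congr (Equiv.subtypePiEquivPi (β := fun _ => R[X])
    (p := fun i p => p.Monic ∧ p.natDegree = d i)), Nat.card_pi]
  simp only [card_monic_natDegree_eq, Finset.prod_pow_eq_pow_sum]

lemma card_shortIntervalFactorizations_natDegree_eq {ι : Type*} [Fintype ι]
    [DecidableEq ι] {A : R[X]} (hA : A.Monic) {m : ℕ} (hm : m ≤ A.natDegree) {d : ι → ℕ}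
    (hd : ∑ i, d i = A.natDegree) {i₀ : ι} (hi₀ : A.natDegree ≤ d i₀ + m) :
    Nat.card {t : shortIntervalFactorizations ι m A // ∀ i, (t.1 i).natDegree = d i} =
      Fintype.card R ^ m := by
  set e := ∑ j : {j // j ≠ i₀}, d j
  have hsum : d i₀ + e = A.natDegree := by
    rw [← hd, ← Finset.add_sum_erase _ _ (Finset.mem_univ i₀),
      Finset.sum_subtype (p := (· ≠ i₀)) _ (fun j => by simp)]
  have hprod (t : ι → R[X]) : ∏ i, t i = t i₀ * ∏ j : {j // j ≠ i₀}, t j := by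
    rw [← Finset.mul_prod_erase _ _ (Finset.mem_univ i₀),
      Finset.prod_subtype (p := (· ≠ i₀)) _ (fun j => by simp)]
  let Q (s : {j // j ≠ i₀} → R[X]) : Prop := ∀ j, (s j).Monic ∧ (s j).natDegree = d j
  have hQ (s) (hs : Q s) : (∏ j, s j).Monic ∧ (∏ j, s j).natDegree = e :=
    ⟨monic_prod_of_monic _ _ fun j _ => (hs j).1,
      (natDegree_prod_of_monic _ _ fun j _ => (hs j).1).trans
        (Finset.sum_congr rfl fun j _ => (hs j).2)⟩
  have hsplit (t : ι → R[X]) :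
      t ∈ shortIntervalFactorizations ι m A ∧ (∀ i, (t i).natDegree = d i) ↔
        Q (fun j => t j) ∧ t i₀ * ∏ j : {j // j ≠ i₀}, t j - A ∈ degreeLT R m := by
    refine ⟨fun ⟨⟨hmonic, hmem⟩, hdeg⟩ =>
      ⟨fun j => ⟨hmonic j, hdeg j⟩, hprod t ▸ hmem⟩,
      fun ⟨hrest, hmem⟩ => ?_⟩
    obtain ⟨hGmonic, hGdeg⟩ := hQ _ hrest
    obtain ⟨hmonic₀, hdeg₀⟩ :=
      monic_and_natDegree_eq_of_mul_sub_mem_degreeLT hA hm hGmonic hmem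
    refine ⟨⟨fun i => ?_, hprod t ▸ hmem⟩, fun i => ?_⟩ <;> by_cases hi : i = i₀
    · exact hi ▸ hmonic₀
    · exact (hrest ⟨i, hi⟩).1
    · exact hi ▸ (by omega : (t i₀).natDegree = d i₀)
    · exact (hrest ⟨i, hi⟩).2
  have equiv := (Equiv.subtypeSubtypeEquivSubtypeInter _ _).trans
    ((((Equiv.piSplitAt i₀ fun _ => R[X]).trans (Equiv.prodComm _ _)).subtypeEquiv hsplit).trans
      (mulSubMemDegreeLTEquiv Q (fun s => ∏ j, s j) (e := e) (m := m) hQ (by omega) A))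
  rw [Nat.card_congr equiv, Nat.card_prod, card_pi_monic_natDegree_eq, card_degreeLT, ← pow_add]
  congr 1
  omega

lemma card_shortIntervalFactorizations {ι : Type*} [Fintype ι] [DecidableEq ι] {A : R[X]}
    (hA : A.Monic) {m : ℕ} (hm : m ≤ A.natDegree)
    (hlarge : Fintype.card ι * (A.natDegree - m) < A.natDegree) :
    Nat.card (shortIntervalFactorizations ι m A) =
      (Fintype.card ι + A.natDegree - 1).choose A.natDegree * Fintype.card R ^ m := by
  let degrees (t : shortIntervalFactorizations ι m A) :
      {d : ι → ℕ // ∑ i, d i = A.natDegree} :=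
    ⟨fun i => (t.1 i).natDegree, by
      rw [← natDegree_prod_of_monic _ _ fun i _ => t.2.1 i]
      exact (monic_and_natDegree_eq_of_sub_mem_degreeLT hA hm t.2.2).2⟩
  have : Finite {d : ι → ℕ // ∑ i, d i = A.natDegree} :=
    .of_equiv _ (Sym.equivNatSumOfFintype ι _)
  rw [Nat.card_eq_card_mul_of_card_fiber_eq degrees
    (pow_ne_zero _ (Fintype.card_ne_zero (α := R))), Nat.card_subtype_sum_eq_choose]
  rintro ⟨d, hd⟩
  obtain ⟨i₀, -, hi₀⟩ : ∃ i ∈ Finset.univ, A.natDegree - m < d i :=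
    Finset.exists_lt_of_sum_lt (by simpa [hd] using hlarge)
  rw [← card_shortIntervalFactorizations_natDegree_eq hA hm hd (i₀ := i₀) (by omega)]
  exact Nat.card_congr <| Equiv.subtypeEquivRight fun t => by simp [degrees, funext_iff]

end Polynomial

lemma Nshort_eq_card_shortIntervalFactorizations (F : Type) [Field F] [Fintype F] (k h : ℕ)
    (A : F[X]) [Finite (shortIntervalFactorizations (Fin k) (h + 1) A)] :
    Nshort F k h A = Nat.card (shortIntervalFactorizations (Fin k) (h + 1) A) := by
  rw [← Nat.card_congr <| Equiv.sigmaFiberEquiv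
      fun t : shortIntervalFactorizations (Fin k) (h + 1) A =>
        fun i : Fin (h + 1) => (∏ j, t.1 j - A).coeff i,
    Nat.card_sigma, Nshort]
  refine Finset.sum_congr rfl fun g _ => ?_
  rw [dpoly, ← Nat.card_coe_set_eq]
  refine Nat.card_congr <| ((Equiv.subtypeSubtypeEquivSubtypeInter
    (· ∈ shortIntervalFactorizations (Fin k) (h + 1) A)
    (fun t => (fun i : Fin (h + 1) => (∏ j, t j - A).coeff i) = g)).trans
    (Equiv.subtypeEquivRight fun t => ?_)).symm
  simp only [shortIntervalFactorizations, Set.mem_ofPred_eq, ← sub_eq_iff_eq_add',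
    eq_sum_C_mul_X_pow_iff, funext_iff, and_assoc]

theorem short_interval_sum_large_h_general (F : Type) [Field F] [Fintype F]
    (k n h : ℕ) (hk : 1 ≤ k) (hh : h + 2 ≤ n)
    (hrange : (k - 1) * n < k * (h + 1))
    (A : Polynomial F) (hA : A.Monic) (hAdeg : A.natDegree = n) :
    Nshort F k h A = Fintype.card F ^ (h + 1) * Nat.choose (n + k - 1) (k - 1) := by
  have hlarge : k * (n - (h + 1)) < n := by
    zify [hk, (by omega : h + 1 ≤ n)] at hrange ⊢
    nlinarith
  have hcard := card_shortIntervalFactorizations (ι := Fin k) hA (m := h + 1) (by omega)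
    (by simpa [hAdeg] using hlarge)
  have : Finite (shortIntervalFactorizations (Fin k) (h + 1) A) :=
    Nat.finite_of_card_ne_zero <| hcard ▸ mul_ne_zero (Nat.choose_pos (by simp; omega)).ne'
      (pow_ne_zero _ Fintype.card_ne_zero)
  rw [Nshort_eq_card_shortIntervalFactorizations, hcard, hAdeg, Fintype.card_fin, mul_comm,
    show k + n - 1 = n + k - 1 by omega,
    Nat.choose_symm_of_eq_add (by omega : n + k - 1 = n + (k - 1))]

theorem short_interval_sum_large_h (F : Type) [Field F] [Fintype F]
    (k n h : ℕ) (hk : 1 ≤ k) (hn : 2 ≤ n) (hh : h + 2 ≤ n)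
    (hrange : (k - 1) * n < k * (h + 1))
    (A : Polynomial F) (hA : A.Monic) (hAdeg : A.natDegree = n) :
    Nshort F k h A = Fintype.card F ^ (h + 1) * Nat.choose (n + k - 1) (k - 1) :=
  short_interval_sum_large_h_general F k n h hk hh hrange A hA hAdeg
end

section
/- Fix integers k ≥ 2 and n ≥ 2 and set h = ⌊(1 − 1/k)n⌋ − 1, and assume 0 ≤ h ≤ n−2. Then there exists a constant C (depending on k, n) such that for every prime power q, with F_q a finite field with q elements and H = q^{h+1}: Var(N_{d_k}) ≤ C · H / √q, where Var(N_{d_k}) := q^{−n} · Σ_{A ∈ M_n} | N_{d_k}(A;h) − q^{h+1}·C(n+k−1, k−1) |². -/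
open Polynomial

/-- The variance `Var(N_{d_k}) = q^{-n} ∑_{A ∈ M_n} |N_{d_k}(A;h) - q^{h+1} C(n+k-1,k-1)|²`. -/
noncomputable def VarShort (F : Type) [Field F] [Fintype F] (k n h : ℕ) : ℝ :=
  (1 / (Fintype.card F : ℝ) ^ n) * ∑ a : Fin n → F,
    ((Nshort F k h (monicOf F n a) : ℝ)
      - (Fintype.card F : ℝ) ^ (h + 1) * (Nat.choose (n + k - 1) (k - 1) : ℝ)) ^ 2

section Aux

variable {F : Type} [Field F]


lemma lowPoly_coeff (N : ℕ) (a : Fin N → F) (j : ℕ) :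
    (∑ i : Fin N, Polynomial.C (a i) * Polynomial.X ^ (i : ℕ)).coeff j =
      if hj : j < N then a ⟨j, hj⟩ else 0 := by
  rw [finset_sum_coeff]
  split_ifs with hj
  · rw [Finset.sum_eq_single (⟨j, hj⟩ : Fin N)]
    · simp
    · intro b _ hb
      rw [coeff_C_mul, coeff_X_pow, if_neg (by simpa [Fin.ext_iff, eq_comm] using hb), mul_zero]
    · simp
  · apply Finset.sum_eq_zero
    intro b _
    rw [coeff_C_mul, coeff_X_pow, if_neg (by omega), mul_zero]

lemma lowPoly_degree_lt (N : ℕ) (a : Fin N → F) :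
    (∑ i : Fin N, Polynomial.C (a i) * Polynomial.X ^ (i : ℕ)).degree < (N : WithBot ℕ) := by
  apply lt_of_le_of_lt (degree_sum_le _ _)
  apply Finset.sup_lt_iff (by exact_mod_cast WithBot.bot_lt_coe N) |>.2
  intro i _
  apply lt_of_le_of_lt (degree_mul_le _ _)
  apply lt_of_le_of_lt (add_le_add degree_C_le (le_refl (Polynomial.X ^ (i:ℕ) : Polynomial F).degree))
  rw [zero_add, degree_X_pow]
  exact_mod_cast (i.2 : (i:ℕ) < N)

lemma monicOf_monic (n : ℕ) (a : Fin n → F) : (monicOf F n a).Monic :=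
  monic_X_pow_add (lowPoly_degree_lt n a)

lemma monicOf_natDegree (n : ℕ) (a : Fin n → F) : (monicOf F n a).natDegree = n := by
  unfold monicOf
  have h1 : (Polynomial.X ^ n + ∑ i : Fin n, Polynomial.C (a i) * Polynomial.X ^ (i : ℕ)).degree = (n : WithBot ℕ) := by
    rw [degree_add_eq_left_of_degree_lt (by rw [degree_X_pow]; exact lowPoly_degree_lt n a), degree_X_pow]
  exact natDegree_eq_of_degree_eq_some h1

lemma monicOf_coeff_lt (n : ℕ) (a : Fin n → F) (j : ℕ) (hj : j < n) :
    (monicOf F n a).coeff j = a ⟨j, hj⟩ := by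
  unfold monicOf
  rw [coeff_add, coeff_X_pow, if_neg (by omega), lowPoly_coeff, dif_pos hj, zero_add]

lemma monicOf_coeff_self (n : ℕ) (a : Fin n → F) : (monicOf F n a).coeff n = 1 := by
  unfold monicOf
  rw [coeff_add, coeff_X_pow, if_pos rfl, lowPoly_coeff, dif_neg (by omega), add_zero]

lemma monicOf_coeff_gt (n : ℕ) (a : Fin n → F) (j : ℕ) (hj : n < j) :
    (monicOf F n a).coeff j = 0 := by
  unfold monicOf
  rw [coeff_add, coeff_X_pow, if_neg (by omega), lowPoly_coeff, dif_neg (by omega), add_zero]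

lemma monicOf_injective (n : ℕ) : Function.Injective (monicOf F n) := by
  intro a b hab
  funext i
  have := congrArg (fun p => Polynomial.coeff p (i : ℕ)) hab
  simpa [monicOf_coeff_lt n _ _ i.2] using this

lemma monicOf_eq_self {f : Polynomial F} (hf : f.Monic) :
    monicOf F f.natDegree (fun i => f.coeff i) = f := by
  ext j
  rcases lt_trichotomy j f.natDegree with hj | hj | hj
  · rw [monicOf_coeff_lt _ _ _ hj]
  · subst hj; rw [monicOf_coeff_self, hf.coeff_natDegree]
  · rw [monicOf_coeff_gt _ _ _ hj, coeff_eq_zero_of_natDegree_lt hj]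

lemma mem_interval_iff {n h : ℕ} (hhn : h + 1 ≤ n) (A f : Polynomial F)
    (hA : A.Monic) (hAd : A.natDegree = n) (hf : f.Monic) (hfd : f.natDegree = n) :
    (∃ c : Fin (h+1) → F, f = A + ∑ i : Fin (h+1), Polynomial.C (c i) * Polynomial.X ^ (i : ℕ)) ↔
      ∀ j, h + 1 ≤ j → j < n → f.coeff j = A.coeff j := by
  constructor
  · rintro ⟨c, rfl⟩ j hj1 hj2
    rw [coeff_add, lowPoly_coeff, dif_neg (by omega), add_zero]
  · intro hc
    refine ⟨fun i => f.coeff i - A.coeff i, ?_⟩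
    ext j
    rw [coeff_add, lowPoly_coeff]
    split_ifs with hj
    · simp
    · rcases lt_trichotomy j n with hjn | hjn | hjn
      · rw [add_zero, hc j (by omega) hjn]
      · subst hjn
        rw [add_zero]
        calc f.coeff j = 1 := by rw [← hfd]; exact hf.coeff_natDegree
          _ = A.coeff j := by rw [← hAd]; exact hA.coeff_natDegree.symm
      · rw [add_zero, coeff_eq_zero_of_natDegree_lt (hfd ▸ hjn),
          coeff_eq_zero_of_natDegree_lt (hAd ▸ hjn)]

/-- `{p : α × β // p.1 = c} ≃ β`. -/
def sndEquiv (α β : Type*) (c : α) : {p : α × β // p.1 = c} ≃ β where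
  toFun p := p.1.2
  invFun y := ⟨(c, y), rfl⟩
  left_inv := by rintro ⟨⟨a, b⟩, rfl⟩; rfl
  right_inv y := rfl

variable [Fintype F]

lemma key_card (h D : ℕ) (g : Polynomial F) (hg : g.Monic) (A : Polynomial F)
    (hle : g.natDegree ≤ h + 1) (hge : h + 1 ≤ D + g.natDegree) :
    Nat.card {b : Fin D → F // ∀ j, h + 1 ≤ j → j < D + g.natDegree →
        (monicOf F D b * g).coeff j = A.coeff j} = Fintype.card F ^ (h + 1 - g.natDegree) := by
  classical
  set e := g.natDegree with he
  set m := D + e - (h+1) with hm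
  have hmD : m ≤ D := by omega
  set Ψ : (Fin D → F) → (Fin m → F) × (Fin (D - m) → F) :=
    fun b => (fun j => (monicOf F D b * g).coeff (h+1+(j:ℕ)), fun s => b ⟨s, by omega⟩) with hΨdef
  have hinj : Function.Injective Ψ := by
    intro b1 b2 hΨ
    by_contra hne
    have hfne : monicOf F D b1 ≠ monicOf F D b2 := fun hcon => hne (monicOf_injective D hcon)
    set E := monicOf F D b1 - monicOf F D b2 with hE
    have hE0 : E ≠ 0 := sub_ne_zero.2 hfne
    have claim1 : ∀ s, s < D - m → E.coeff s = 0 := by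
      intro s hs
      have h2 := congr_fun (congrArg Prod.snd hΨ) ⟨s, hs⟩
      simp only [hΨdef] at h2
      rw [hE, coeff_sub, monicOf_coeff_lt D b1 s (by omega), monicOf_coeff_lt D b2 s (by omega)]
      rw [sub_eq_zero]
      exact h2
    have claim2 : ∀ j, h + 1 ≤ j → (E * g).coeff j = 0 := by
      intro j hj
      rw [hE, sub_mul, coeff_sub, sub_eq_zero]
      rcases lt_or_ge j (D + e) with hjn | hjn
      · have h1 := congr_fun (congrArg Prod.fst hΨ) ⟨j - (h+1), by omega⟩
        simp only [hΨdef] at h1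
        have hjj : h + 1 + (j - (h+1)) = j := by omega
        rwa [hjj] at h1
      · have hd1 : (monicOf F D b1 * g).natDegree = D + e := by
          rw [(monicOf_monic D b1).natDegree_mul hg, monicOf_natDegree]
        have hd2 : (monicOf F D b2 * g).natDegree = D + e := by
          rw [(monicOf_monic D b2).natDegree_mul hg, monicOf_natDegree]
        rcases eq_or_lt_of_le hjn with hj2 | hj2
        · subst hj2
          calc (monicOf F D b1 * g).coeff (D+e) = 1 := by
                rw [← hd1]; exact ((monicOf_monic D b1).mul hg).coeff_natDegree
            _ = (monicOf F D b2 * g).coeff (D+e) := by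
                rw [← hd2]; exact (((monicOf_monic D b2).mul hg).coeff_natDegree).symm
        · rw [coeff_eq_zero_of_natDegree_lt (hd1 ▸ hj2),
            coeff_eq_zero_of_natDegree_lt (hd2 ▸ hj2)]
    have hEd : D - m ≤ E.natDegree := by
      by_contra hcon
      push_neg at hcon
      exact (Polynomial.leadingCoeff_ne_zero.mpr hE0) (claim1 E.natDegree hcon)
    have hEg0 : E * g ≠ 0 := mul_ne_zero hE0 hg.ne_zero
    have hEgd : (E * g).natDegree = E.natDegree + e := Polynomial.natDegree_mul hE0 hg.ne_zero
    have : (E * g).coeff ((E * g).natDegree) = 0 := claim2 _ (by omega)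
    exact (Polynomial.leadingCoeff_ne_zero.mpr hEg0) this
  have hcards : Fintype.card (Fin D → F) = Fintype.card ((Fin m → F) × (Fin (D - m) → F)) := by
    simp only [Fintype.card_prod, Fintype.card_fun, Fintype.card_fin, ← pow_add]
    congr 1
    omega
  have hbij : Function.Bijective Ψ :=
    (Fintype.bijective_iff_injective_and_card Ψ).2 ⟨hinj, hcards⟩
  set c : Fin m → F := fun j => A.coeff (h+1+(j:ℕ)) with hc
  have hiff : ∀ b : Fin D → F,
      (∀ j, h + 1 ≤ j → j < D + e → (monicOf F D b * g).coeff j = A.coeff j) ↔ (Ψ b).1 = c := by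
    intro b
    constructor
    · intro hb
      funext j
      exact hb (h+1+(j:ℕ)) (by omega) (by omega)
    · intro hb j hj1 hj2
      have := congr_fun hb ⟨j - (h+1), by omega⟩
      simp only [hΨdef, hc] at this
      have hjj : h + 1 + (j - (h+1)) = j := by omega
      rwa [hjj] at this
  calc Nat.card {b : Fin D → F // ∀ j, h + 1 ≤ j → j < D + g.natDegree →
        (monicOf F D b * g).coeff j = A.coeff j}
      = Nat.card {b : Fin D → F // (Ψ b).1 = c} :=
        Nat.card_congr (Equiv.subtypeEquivRight hiff)
    _ = Nat.card {p : (Fin m → F) × (Fin (D - m) → F) // p.1 = c} :=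
        Nat.card_congr (Equiv.subtypeEquiv (Equiv.ofBijective Ψ hbij) (fun b => Iff.rfl))
    _ = Nat.card (Fin (D - m) → F) := Nat.card_congr (sndEquiv _ _ c)
    _ = Fintype.card F ^ (D - m) := by
        rw [Nat.card_eq_fintype_card, Fintype.card_fun, Fintype.card_fin]
    _ = Fintype.card F ^ (h + 1 - g.natDegree) := by
        congr 1
        omega

/-- `{p : α × β // P p} ≃ Σ y : β, {x : α // P (x, y)}`. -/
def prodSubtypeEquivSigma {α β : Type*} (P : α × β → Prop) :
    {p : α × β // P p} ≃ Σ y : β, {x : α // P (x, y)} where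
  toFun p := ⟨p.1.2, p.1.1, by rcases p with ⟨⟨x, y⟩, h⟩; exact h⟩
  invFun s := ⟨(s.2.1, s.1), s.2.2⟩
  left_inv := by rintro ⟨⟨x, y⟩, h⟩; rfl
  right_inv := by rintro ⟨y, x, h⟩; rfl

lemma comp_card {k n h : ℕ} (a : Fin n → F) (d : Fin k → ℕ)
    (hd : ∑ j, d j = n) (i0 : Fin k) (hi0 : n - (h+1) ≤ d i0) (hn1 : h + 2 ≤ n) :
    Nat.card {b : (j : Fin k) → (Fin (d j) → F) //
      ∃ c : Fin (h+1) → F, (∏ j, monicOf F (d j) (b j)) =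
        monicOf F n a + ∑ i : Fin (h+1), Polynomial.C (c i) * Polynomial.X ^ (i:ℕ)}
      = Fintype.card F ^ (h+1) := by
  classical
  have hdn : ∀ j, d j ≤ n := fun j =>
    hd ▸ Finset.single_le_sum (f := d) (fun _ _ => Nat.zero_le _) (Finset.mem_univ j)
  set A := monicOf F n a with hA
  set gP : ((j : {j : Fin k // j ≠ i0}) → (Fin (d (j : Fin k)) → F)) → Polynomial F :=
    fun o => ∏ j : {j : Fin k // j ≠ i0}, monicOf F (d (j : Fin k)) (o j) with hgP
  have hgPm : ∀ o, (gP o).Monic :=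
    fun o => monic_prod_of_monic _ _ (fun j _ => monicOf_monic _ _)
  have hsub : ∑ j ∈ Finset.univ.erase i0, d j = ∑ j : {j : Fin k // j ≠ i0}, d j :=
    Finset.sum_subtype _ (fun j => by simp) d
  have hsum' : ∑ j : {j : Fin k // j ≠ i0}, d j = n - d i0 := by
    have h1 := Finset.sum_erase_add Finset.univ d (Finset.mem_univ i0)
    omega
  have hgPd : ∀ o, (gP o).natDegree = n - d i0 := fun o => by
    rw [hgP, natDegree_prod _ _ (fun j _ => (monicOf_monic _ _).ne_zero)]
    simp only [monicOf_natDegree]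
    exact hsum'
  have hsplit : ∀ b : (j : Fin k) → Fin (d j) → F,
      ∏ j, monicOf F (d j) (b j) = monicOf F (d i0) (b i0) * gP (fun j => b (j : Fin k)) := by
    intro b
    rw [hgP, ← Finset.mul_prod_erase Finset.univ _ (Finset.mem_univ i0)]
    congr 1
    exact Finset.prod_subtype _ (fun j => by simp) _
  have e1 := (Equiv.piSplitAt i0 (fun j => Fin (d j) → F)).subtypeEquiv
    (p := fun b => ∃ c : Fin (h+1) → F, ∏ j, monicOf F (d j) (b j) =
      A + ∑ i : Fin (h+1), Polynomial.C (c i) * Polynomial.X ^ (i:ℕ))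
    (q := fun p => ∃ c : Fin (h+1) → F, monicOf F (d i0) p.1 * gP p.2 =
      A + ∑ i : Fin (h+1), Polynomial.C (c i) * Polynomial.X ^ (i:ℕ))
    (fun b => by simp only [Equiv.piSplitAt_apply]; rw [hsplit b])
  have e2 := prodSubtypeEquivSigma
    (P := fun p : (Fin (d i0) → F) × ((j : {j : Fin k // j ≠ i0}) → (Fin (d (j : Fin k)) → F)) =>
      ∃ c : Fin (h+1) → F, monicOf F (d i0) p.1 * gP p.2 =
        A + ∑ i : Fin (h+1), Polynomial.C (c i) * Polynomial.X ^ (i:ℕ))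
  have e3 := Equiv.sigmaCongrRight (fun o => Equiv.subtypeEquivRight (p := fun v : Fin (d i0) → F =>
      ∃ c : Fin (h+1) → F, monicOf F (d i0) v * gP o =
        A + ∑ i : Fin (h+1), Polynomial.C (c i) * Polynomial.X ^ (i:ℕ))
    (q := fun v => ∀ j, h + 1 ≤ j → j < d i0 + (gP o).natDegree →
        (monicOf F (d i0) v * gP o).coeff j = A.coeff j)
    (fun v => by
      have hi1 := hdn i0
      have hfm : (monicOf F (d i0) v * gP o).Monic := (monicOf_monic _ _).mul (hgPm o)
      have hfd : (monicOf F (d i0) v * gP o).natDegree = n := by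
        rw [(monicOf_monic _ _).natDegree_mul (hgPm o), monicOf_natDegree, hgPd o]
        omega
      have hbnd : d i0 + (gP o).natDegree = n := by rw [hgPd o]; omega
      rw [hbnd]
      exact mem_interval_iff (by omega) A _ (monicOf_monic n a) (monicOf_natDegree n a) hfm hfd))
  rw [Nat.card_congr ((e1.trans e2).trans e3), Nat.card_eq_fintype_card, Fintype.card_sigma]
  have hfib : ∀ o, Fintype.card {v : Fin (d i0) → F // ∀ j, h + 1 ≤ j →
      j < d i0 + (gP o).natDegree → (monicOf F (d i0) v * gP o).coeff j = A.coeff j}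
      = Fintype.card F ^ (h + 1 - (n - d i0)) := by
    intro o
    rw [← Nat.card_eq_fintype_card, key_card h (d i0) (gP o) (hgPm o) A
      (by rw [hgPd o]; omega) (by rw [hgPd o]; omega), hgPd o]
  simp only [hfib]
  rw [Finset.sum_const, Finset.card_univ, smul_eq_mul, Fintype.card_pi]
  simp only [Fintype.card_fun, Fintype.card_fin]
  rw [Finset.prod_pow_eq_pow_sum, hsum', ← pow_add]
  congr 1
  omega

lemma exists_big {k n h : ℕ} (hk : 2 ≤ k) (hdef : h + 1 = (k - 1) * n / k)
    (hh : h + 2 ≤ n) (d : Fin k → ℕ) (hd : ∑ j, d j = n) : ∃ i, n - (h+1) ≤ d i := by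
  by_contra hcon
  push_neg at hcon
  have hb : n ≤ k * (n - (h+1) - 1) := by
    calc n = ∑ j, d j := hd.symm
      _ ≤ ∑ _j : Fin k, (n - (h+1) - 1) :=
          Finset.sum_le_sum (fun j _ => by have := hcon j; omega)
      _ = k * (n - (h+1) - 1) := by
          rw [Finset.sum_const, Finset.card_univ, Fintype.card_fin, smul_eq_mul]
  have hdm := Nat.div_add_mod ((k-1)*n) k
  have hmlt : ((k-1)*n) % k < k := Nat.mod_lt _ (by omega)
  set r := ((k-1)*n) % k with hr
  -- cast to ℤ
  have h1 : (n:ℤ) ≤ (k:ℤ) * ((n:ℤ) - ((h:ℤ)+1) - 1) := by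
    calc (n:ℤ) ≤ ((k * (n - (h+1) - 1) : ℕ) : ℤ) := by exact_mod_cast hb
      _ = (k:ℤ) * ((n:ℤ) - ((h:ℤ)+1) - 1) := by push_cast [Nat.sub_sub]; rw [Nat.cast_sub (by omega)]; push_cast; ring
  have h2 : ((k:ℤ) - 1) * (n:ℤ) = (k:ℤ) * ((h:ℤ)+1) + (r:ℤ) := by
    have : ((((k-1)*n) : ℕ) : ℤ) = ((k : ℤ) - 1) * n := by
      rw [Nat.cast_mul, Nat.cast_sub (by omega)]; push_cast; ring
    rw [← this, ← hdef] at *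
    exact_mod_cast (by rw [← hdef] at hdm; exact_mod_cast congrArg (Nat.cast : ℕ → ℤ) hdm.symm)
  have h3 : (r:ℤ) < (k:ℤ) := by exact_mod_cast hmlt
  nlinarith [h1, h2, h3]

lemma sum_card_eq {α ι : Type*} [Fintype α] [Fintype ι] (P : ι → α → Prop)
    (huniq : ∀ a i1 i2, P i1 a → P i2 a → i1 = i2) :
    ∑ i, Nat.card {a // P i a} = Nat.card {a // ∃ i, P i a} := by
  classical
  have h1 : ∀ i, Nat.card {a // P i a} = (Finset.univ.filter (fun a => P i a)).card := by
    intro i; rw [Nat.card_eq_fintype_card, Fintype.card_subtype]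
  simp only [h1]
  rw [Nat.card_eq_fintype_card, Fintype.card_subtype, ← Finset.card_biUnion]
  · congr 1; ext a; simp
  · intro i _ j _ hij
    simp only [Finset.disjoint_left, Finset.mem_filter]
    rintro a ⟨_, h1a⟩ ⟨_, h2a⟩
    exact hij (huniq a i j h1a h2a)

lemma card_comps (k n : ℕ) (hk : 1 ≤ k) :
    (Finset.piAntidiag (Finset.univ : Finset (Fin k)) n).card = (n + k - 1).choose (k - 1) := by
  classical
  rw [← Finset.map_sym_eq_piAntidiag, Finset.card_map, Finset.sym_univ, Finset.card_univ,
    Sym.card_sym_eq_multichoose, Fintype.card_fin, Nat.multichoose_eq,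
    show k + n - 1 = n + k - 1 by omega,
    ← Nat.choose_symm (by omega : k - 1 ≤ n + k - 1), show n + k - 1 - (k-1) = n by omega]

lemma dpoly_eq (k n : ℕ) (f : Polynomial F) (hf : f.Monic) (hfd : f.natDegree = n) :
    dpoly F k f = ∑ d ∈ Finset.piAntidiag (Finset.univ : Finset (Fin k)) n,
      Nat.card {b : (j : Fin k) → (Fin (d j) → F) // ∏ j, monicOf F (d j) (b j) = f} := by
  classical
  rw [dpoly, ← Nat.card_coe_set_eq]
  set S := {t : Fin k → Polynomial F | (∀ i, (t i).Monic) ∧ ∏ i, t i = f} with hS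
  set comps := Finset.piAntidiag (Finset.univ : Finset (Fin k)) n with hcomps
  set Φ : (Σ d : {d : Fin k → ℕ // d ∈ comps},
      {b : (j : Fin k) → (Fin (d.1 j) → F) // ∏ j, monicOf F (d.1 j) (b j) = f}) → S :=
    fun s => ⟨fun j => monicOf F (s.1.1 j) (s.2.1 j),
      ⟨fun j => monicOf_monic _ _, s.2.2⟩⟩ with hΦ
  have hbij : Function.Bijective Φ := by
    constructor
    · rintro ⟨⟨d1, hd1⟩, b1, hb1⟩ ⟨⟨d2, hd2⟩, b2, hb2⟩ hst
      have hval := congrArg Subtype.val hst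
      simp only [hΦ] at hval
      have hdeq : d1 = d2 := funext fun j => by
        calc d1 j = (monicOf F (d1 j) (b1 j)).natDegree := (monicOf_natDegree _ _).symm
          _ = (monicOf F (d2 j) (b2 j)).natDegree := by rw [congr_fun hval j]
          _ = d2 j := monicOf_natDegree _ _
      subst hdeq
      have hbeq : b1 = b2 := funext fun j => monicOf_injective _ (congr_fun hval j)
      subst hbeq
      rfl
    · rintro ⟨t, ht1, ht2⟩
      have hmem : (fun j => (t j).natDegree) ∈ comps := by
        rw [hcomps, Finset.mem_piAntidiag]
        refine ⟨?_, fun i _ => Finset.mem_univ i⟩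
        rw [← natDegree_prod _ _ (fun j _ => (ht1 j).ne_zero), ht2, hfd]
      refine ⟨⟨⟨fun j => (t j).natDegree, hmem⟩, ⟨fun j i => (t j).coeff i, ?_⟩⟩, ?_⟩
      · calc ∏ j, monicOf F ((t j).natDegree) (fun i => (t j).coeff i)
            = ∏ j, t j := Finset.prod_congr rfl (fun j _ => monicOf_eq_self (ht1 j))
          _ = f := ht2
      · apply Subtype.ext
        funext j
        exact monicOf_eq_self (ht1 j)
  rw [← Nat.card_congr (Equiv.ofBijective Φ hbij), Nat.card_eq_fintype_card,
    Fintype.card_sigma]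
  rw [← Finset.sum_coe_sort comps
    (fun d => Nat.card {b : (j : Fin k) → (Fin (d j) → F) // ∏ j, monicOf F (d j) (b j) = f})]
  congr 1
  funext d
  rw [Nat.card_eq_fintype_card]


lemma Nshort_eq {k n h : ℕ} (hk : 2 ≤ k) (hdef : h + 1 = (k - 1) * n / k)
    (hh : h + 2 ≤ n) (a : Fin n → F) :
    Nshort F k h (monicOf F n a) = Fintype.card F ^ (h+1) * (n + k - 1).choose (k - 1) := by
  classical
  have hmonA := monicOf_monic n a
  have hdegA := monicOf_natDegree n a
  have hstep : ∀ c : Fin (h+1) → F,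
      (monicOf F n a + ∑ i : Fin (h+1), Polynomial.C (c i) * Polynomial.X ^ (i:ℕ)).Monic ∧
      (monicOf F n a + ∑ i : Fin (h+1), Polynomial.C (c i) * Polynomial.X ^ (i:ℕ)).natDegree = n := by
    intro c
    have hdeg : (∑ i : Fin (h+1), Polynomial.C (c i) * Polynomial.X ^ (i:ℕ)).degree
        < (monicOf F n a).degree := by
      apply lt_of_lt_of_le (lowPoly_degree_lt _ c)
      rw [Polynomial.degree_eq_natDegree hmonA.ne_zero, hdegA]
      exact_mod_cast (by omega : h + 1 ≤ n)
    constructor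
    · exact hmonA.add_of_left hdeg
    · have h1 : (monicOf F n a + ∑ i : Fin (h+1), Polynomial.C (c i) * Polynomial.X ^ (i:ℕ)).degree
          = (n : WithBot ℕ) := by
        rw [degree_add_eq_left_of_degree_lt hdeg, Polynomial.degree_eq_natDegree hmonA.ne_zero,
          hdegA]
      exact natDegree_eq_of_degree_eq_some h1
  rw [Nshort]
  calc ∑ c : Fin (h+1) → F,
        dpoly F k (monicOf F n a + ∑ i : Fin (h+1), Polynomial.C (c i) * Polynomial.X ^ (i:ℕ))
      = ∑ c : Fin (h+1) → F, ∑ d ∈ Finset.piAntidiag (Finset.univ : Finset (Fin k)) n,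
          Nat.card {b : (j : Fin k) → (Fin (d j) → F) // ∏ j, monicOf F (d j) (b j) =
            monicOf F n a + ∑ i : Fin (h+1), Polynomial.C (c i) * Polynomial.X ^ (i:ℕ)} :=
        Finset.sum_congr rfl (fun c _ => dpoly_eq k n _ (hstep c).1 (hstep c).2)
    _ = ∑ d ∈ Finset.piAntidiag (Finset.univ : Finset (Fin k)) n, ∑ c : Fin (h+1) → F,
          Nat.card {b : (j : Fin k) → (Fin (d j) → F) // ∏ j, monicOf F (d j) (b j) =
            monicOf F n a + ∑ i : Fin (h+1), Polynomial.C (c i) * Polynomial.X ^ (i:ℕ)} :=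
        Finset.sum_comm
    _ = ∑ d ∈ Finset.piAntidiag (Finset.univ : Finset (Fin k)) n, Fintype.card F ^ (h+1) := by
        apply Finset.sum_congr rfl
        intro d hd
        calc ∑ c : Fin (h+1) → F,
              Nat.card {b : (j : Fin k) → (Fin (d j) → F) // ∏ j, monicOf F (d j) (b j) =
                monicOf F n a + ∑ i : Fin (h+1), Polynomial.C (c i) * Polynomial.X ^ (i:ℕ)}
            = Nat.card {b : (j : Fin k) → (Fin (d j) → F) // ∃ c : Fin (h+1) → F,
                ∏ j, monicOf F (d j) (b j) =
                  monicOf F n a + ∑ i : Fin (h+1), Polynomial.C (c i) * Polynomial.X ^ (i:ℕ)} := by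
              apply sum_card_eq
              intro b c1 c2 h1 h2
              have h3 := h1.symm.trans h2
              have h4 : (∑ i : Fin (h+1), Polynomial.C (c1 i) * Polynomial.X ^ (i:ℕ))
                  = ∑ i : Fin (h+1), Polynomial.C (c2 i) * Polynomial.X ^ (i:ℕ) :=
                add_left_cancel h3
              funext i
              have h5 := congrArg (fun p => Polynomial.coeff p (i : ℕ)) h4
              simp only [lowPoly_coeff] at h5
              rw [dif_pos i.2, dif_pos i.2] at h5
              simpa using h5
          _ = Fintype.card F ^ (h+1) := by
              obtain ⟨hsum, -⟩ := Finset.mem_piAntidiag.1 hd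
              obtain ⟨i0, hi0⟩ := exists_big hk hdef hh d hsum
              exact comp_card a d hsum i0 hi0 hh
    _ = Fintype.card F ^ (h+1) * (n + k - 1).choose (k - 1) := by
        rw [Finset.sum_const, smul_eq_mul, card_comps k n (by omega), mul_comm]

end Aux

theorem variance_short_interval_critical_h (k n h : ℕ) (hk : 2 ≤ k) (hn : 2 ≤ n)
    (hdef : h + 1 = (k - 1) * n / k) (hh : h + 2 ≤ n) :
    ∃ C : ℝ, ∀ q : ℕ, IsPrimePow q →
      ∀ (F : Type) [Field F] [Fintype F], Fintype.card F = q →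
        VarShort F k n h ≤ C * (q : ℝ) ^ (h + 1) / Real.sqrt q := by
  refine ⟨1, fun q hq F _ _ hcard => ?_⟩
  have hvar : VarShort F k n h = 0 := by
    rw [VarShort]
    rw [Finset.sum_eq_zero, mul_zero]
    intro a _
    rw [Nshort_eq hk hdef hh a]
    push_cast
    ring
  rw [hvar]
  apply div_nonneg _ (Real.sqrt_nonneg _)
  positivity
end

section
/- Let q be a prime power, F_q a finite field with q elements, and let k ≥ 1, n, h be integers with 0 ≤ h ≤ n−2. Let χ be a primitive even Dirichlet character modulo T^{n−h} in F_q[t]. If n > k(n−h−1), then Σ_{f ∈ M_n} d_k(f) χ(f) = 0. -/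
open Polynomial

/-- The ideal `(T^m)` in `F_q[t]`, where `T` is the variable. -/
noncomputable def Tpow (F : Type) [Field F] (m : ℕ) : Ideal (Polynomial F) :=
  Ideal.span {(Polynomial.X : Polynomial F) ^ m}


set_option linter.unusedSectionVars false
set_option linter.unusedVariables false

namespace TwAux
variable (F : Type) [Field F]

lemma coeff_sumCX {m : ℕ} (b : Fin m → F) (j : ℕ) :
    (∑ i : Fin m, C (b i) * X ^ (i : ℕ)).coeff j = if h : j < m then b ⟨j, h⟩ else 0 := by
  rw [finset_sum_coeff]
  simp only [coeff_C_mul, coeff_X_pow]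
  split
  case isTrue h =>
    rw [Finset.sum_eq_single (⟨j, h⟩ : Fin m)]
    · simp
    · intro i _ hi
      have : j ≠ (i : ℕ) := fun hji => hi (Fin.ext hji.symm)
      simp [this]
    · simp
  case isFalse h =>
    apply Finset.sum_eq_zero
    intro i _
    have : j ≠ (i : ℕ) := by have := i.isLt; omega
    simp [this]

lemma coeff_monicOf {n : ℕ} (a : Fin n → F) (j : ℕ) (hj : j < n) :
    (monicOf F n a).coeff j = a ⟨j, hj⟩ := by
  rw [monicOf, coeff_add, coeff_X_pow, coeff_sumCX]
  simp [hj, Nat.ne_of_lt hj]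

lemma degree_sumCX_lt {n : ℕ} (a : Fin n → F) :
    (∑ i : Fin n, C (a i) * X ^ (i : ℕ)).degree < (n : WithBot ℕ) := by
  apply lt_of_le_of_lt (degree_sum_le _ _)
  rw [Finset.sup_lt_iff (by exact_mod_cast WithBot.bot_lt_coe n)]
  intro i _
  apply lt_of_le_of_lt (degree_C_mul_X_pow_le _ _)
  exact_mod_cast i.isLt

lemma monic_monicOf {n : ℕ} (a : Fin n → F) : (monicOf F n a).Monic :=
  monic_X_pow_add (degree_sumCX_lt F a)

lemma natDegree_monicOf {n : ℕ} (a : Fin n → F) : (monicOf F n a).natDegree = n := by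
  have : (monicOf F n a).degree = (n : WithBot ℕ) := by
    rw [monicOf, degree_add_eq_left_of_degree_lt, degree_X_pow]
    rw [degree_X_pow]; exact degree_sumCX_lt F a
  exact natDegree_eq_of_degree_eq_some this

lemma monicOf_injective {n : ℕ} : Function.Injective (monicOf F n) := by
  intro a b hab
  funext i
  have h := congrArg (fun p => Polynomial.coeff p (i : ℕ)) hab
  simp only [coeff_monicOf F _ _ i.isLt] at h
  simpa using h

lemma mk_eq_mk_iff {m : ℕ} {a b : Polynomial F} :
    Ideal.Quotient.mk (Tpow F m) a = Ideal.Quotient.mk (Tpow F m) b ↔ X ^ m ∣ a - b := by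
  rw [Ideal.Quotient.mk_eq_mk_iff_sub_mem, Tpow, Ideal.mem_span_singleton]

noncomputable def lowMap (m : ℕ) (b : Fin m → F) : Polynomial F ⧸ Tpow F m :=
  Ideal.Quotient.mk _ (∑ i : Fin m, C (b i) * X ^ (i : ℕ))

lemma lowMap_bijective (m : ℕ) : Function.Bijective (lowMap F m) := by
  constructor
  · intro b b' hbb
    rw [lowMap, lowMap, mk_eq_mk_iff, X_pow_dvd_iff] at hbb
    funext i
    have h := hbb i i.isLt
    rw [coeff_sub, coeff_sumCX, coeff_sumCX] at h
    simp only [i.isLt, dif_pos] at h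
    simpa [sub_eq_zero] using h
  · intro x
    obtain ⟨f, rfl⟩ := Ideal.Quotient.mk_surjective x
    refine ⟨fun i => f.coeff i, ?_⟩
    rw [lowMap, mk_eq_mk_iff, X_pow_dvd_iff]
    intro d hd
    rw [coeff_sub, coeff_sumCX]
    simp [hd]

lemma isUnit_mk_iff {m : ℕ} (hm : 1 ≤ m) (f : Polynomial F) :
    IsUnit (Ideal.Quotient.mk (Tpow F m) f) ↔ ¬ (X ∣ f) := by
  rw [isUnit_iff_exists_inv]
  constructor
  · rintro ⟨y, hy⟩ hX
    obtain ⟨g, rfl⟩ := Ideal.Quotient.mk_surjective y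
    rw [← map_mul, show (1 : Polynomial F ⧸ Tpow F m) = Ideal.Quotient.mk _ 1 from (map_one _).symm,
      mk_eq_mk_iff] at hy
    obtain ⟨c, hc⟩ := hy
    have h1 : (X : Polynomial F) ∣ 1 := by
      have : (1 : Polynomial F) = f * g - X ^ m * c := by rw [← hc]; ring
      rw [this]
      exact dvd_sub (hX.mul_right g) (dvd_mul_of_dvd_left (dvd_pow_self X (by omega)) c)
    exact Polynomial.not_isUnit_X (isUnit_of_dvd_one h1)
  · intro hX
    have hco : IsCoprime f (X ^ m : Polynomial F) :=
      ((Polynomial.prime_X.coprime_iff_not_dvd.mpr hX).symm).pow_right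
    obtain ⟨u, v, huv⟩ := hco
    refine ⟨Ideal.Quotient.mk _ u, ?_⟩
    rw [← map_mul, show (1 : Polynomial F ⧸ Tpow F m) = Ideal.Quotient.mk _ 1 from (map_one _).symm,
      mk_eq_mk_iff]
    exact ⟨-v, by linear_combination huv⟩


variable [Fintype F]


/-- splitting equiv -/
noncomputable def splitE {m d : ℕ} (hmd : m ≤ d) :
    (Fin d → F) ≃ (Fin m → F) × (Fin (d - m) → F) :=
  (Equiv.arrowCongr (finCongr (Nat.add_sub_cancel' hmd).symm) (Equiv.refl F)).trans
    ((Equiv.arrowCongr finSumFinEquiv.symm (Equiv.refl F)).trans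
      (Equiv.sumArrowEquivProdArrow _ _ F))

lemma splitE_fst {m d : ℕ} (hmd : m ≤ d) (a : Fin d → F) (i : Fin m) :
    (splitE F hmd a).1 i = a (Fin.castLE hmd i) := by
  simp only [splitE, Equiv.trans_apply, Equiv.arrowCongr_apply, Equiv.sumArrowEquivProdArrow,
    Equiv.coe_fn_mk, Function.comp_apply, Equiv.refl_apply, Equiv.symm_symm]
  congr 1

lemma sum_char_eq_zero {m : ℕ} (χ : MulChar (Polynomial F ⧸ Tpow F m) ℂ) (hχ : χ ≠ 1)
    {d : ℕ} (hmd : m ≤ d) :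
    ∑ a : Fin d → F, χ (Ideal.Quotient.mk (Tpow F m) (monicOf F d a)) = 0 := by
  classical
  haveI : Fintype (Polynomial F ⧸ Tpow F m) := Fintype.ofBijective _ (lowMap_bijective F m)
  have hsum : ∑ b : Fin m → F, χ (lowMap F m b) = 0 := by
    have h0 : ∑ x : Polynomial F ⧸ Tpow F m, χ x = 0 := MulChar.sum_eq_zero_of_ne_one hχ
    rw [← (Equiv.ofBijective _ (lowMap_bijective F m)).sum_comp (fun x => χ x)] at h0
    exact h0
  have key : ∀ a : Fin d → F,
      Ideal.Quotient.mk (Tpow F m) (monicOf F d a)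
        = lowMap F m (fun i => a (Fin.castLE hmd i)) := by
    intro a
    rw [lowMap, mk_eq_mk_iff, X_pow_dvd_iff]
    intro j hj
    have hjd : j < d := lt_of_lt_of_le hj hmd
    rw [coeff_sub, coeff_monicOf F a j hjd, coeff_sumCX]
    simp only [hj, dif_pos]
    rw [sub_eq_zero]
    congr 1
  simp_rw [key]
  calc ∑ a : Fin d → F, χ (lowMap F m (fun i => a (Fin.castLE hmd i)))
      = ∑ p : (Fin m → F) × (Fin (d - m) → F),
          χ (lowMap F m (fun i => (splitE F hmd).symm p (Fin.castLE hmd i))) :=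
        ((splitE F hmd).symm.sum_comp
          (fun a => χ (lowMap F m (fun i => a (Fin.castLE hmd i))))).symm
    _ = ∑ p : (Fin m → F) × (Fin (d - m) → F), χ (lowMap F m p.1) := by
        apply Finset.sum_congr rfl
        intro p _
        have hfe : (fun i => (splitE F hmd).symm p (Fin.castLE hmd i)) = p.1 :=
          funext fun i => by
            rw [← splitE_fst F hmd ((splitE F hmd).symm p) i, Equiv.apply_symm_apply]
        rw [hfe]
    _ = 0 := by
        rw [Fintype.sum_prod_type]
        simp only [Finset.sum_const]
        rw [← Finset.smul_sum, hsum, smul_zero]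

noncomputable def monicOfEmb (n : ℕ) : (Fin n → F) ↪ Polynomial F :=
  ⟨monicOf F n, monicOf_injective F⟩

noncomputable def Mset (n : ℕ) : Finset (Polynomial F) :=
  Finset.map (monicOfEmb F n) Finset.univ

lemma mem_Mset {n : ℕ} {f : Polynomial F} : f ∈ Mset F n ↔ f.Monic ∧ f.natDegree = n := by
  constructor
  · intro hf
    rw [Mset, Finset.mem_map] at hf
    obtain ⟨a, -, rfl⟩ := hf
    exact ⟨monic_monicOf F a, natDegree_monicOf F a⟩
  · rintro ⟨hmon, rfl⟩
    rw [Mset, Finset.mem_map]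
    refine ⟨fun i => f.coeff i, Finset.mem_univ _, ?_⟩
    show monicOf F _ _ = f
    conv_rhs => rw [hmon.as_sum]
    rw [monicOf, Fin.sum_univ_eq_sum_range (fun i => C (f.coeff i) * X ^ i)]

lemma sum_Mset {n : ℕ} {M : Type*} [AddCommMonoid M] (g : Polynomial F → M) :
    ∑ f ∈ Mset F n, g f = ∑ a : Fin n → F, g (monicOf F n a) := by
  rw [Mset]
  exact Finset.sum_map Finset.univ (monicOfEmb F n) g

lemma sum_Mset_char {m d : ℕ} (χ : MulChar (Polynomial F ⧸ Tpow F m) ℂ) (hχ : χ ≠ 1)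
    (hmd : m ≤ d) :
    ∑ f ∈ Mset F d, χ (Ideal.Quotient.mk (Tpow F m) f) = 0 := by
  rw [sum_Mset]
  exact sum_char_eq_zero F χ hχ hmd


end TwAux

open TwAux

theorem twisted_divisor_sum_vanishes (F : Type) [Field F] [Fintype F]
    (k n h : ℕ) (hk : 1 ≤ k) (hh : h + 2 ≤ n)
    (χ : MulChar (Polynomial F ⧸ Tpow F (n - h)) ℂ)
    (heven : ∀ c : F, c ≠ 0 → ∀ f : Polynomial F,
      χ (Ideal.Quotient.mk (Tpow F (n - h)) (Polynomial.C c * f))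
        = χ (Ideal.Quotient.mk (Tpow F (n - h)) f))
    (hprimitive : ¬ ∃ χ' : MulChar (Polynomial F ⧸ Tpow F (n - h - 1)) ℂ,
      ∀ f : Polynomial F,
        χ (Ideal.Quotient.mk (Tpow F (n - h)) f)
          = χ' (Ideal.Quotient.mk (Tpow F (n - h - 1)) f))
    (hrange : k * (n - h - 1) < n) :
    ∑ a : Fin n → F, (dpoly F k (monicOf F n a) : ℂ) *
        χ (Ideal.Quotient.mk (Tpow F (n - h)) (monicOf F n a)) = 0 := by
  classical
  have hm1 : 1 ≤ n - h := by omega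
  have hm1' : 1 ≤ n - h - 1 := by omega
  -- χ is nontrivial
  have hχ1 : χ ≠ 1 := by
    intro h1
    apply hprimitive
    refine ⟨1, fun f => ?_⟩
    rw [h1]
    by_cases hX : (X : Polynomial F) ∣ f
    · rw [MulChar.map_nonunit _ (fun hu => ((isUnit_mk_iff F hm1 f).mp hu) hX),
          MulChar.map_nonunit _ (fun hu => ((isUnit_mk_iff F hm1' f).mp hu) hX)]
    · rw [MulChar.one_apply ((isUnit_mk_iff F hm1 f).mpr hX),
          MulChar.one_apply ((isUnit_mk_iff F hm1' f).mpr hX)]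
  rw [← sum_Mset F (fun f => (dpoly F k f : ℂ) * χ (Ideal.Quotient.mk (Tpow F (n - h)) f))]
  -- the finsets involved
  set U : Finset (Polynomial F) := (Finset.range (n + 1)).biUnion (fun d => Mset F d) with hU
  have mem_U : ∀ p : Polynomial F, p ∈ U ↔ p.Monic ∧ p.natDegree ≤ n := by
    intro p
    rw [hU, Finset.mem_biUnion]
    constructor
    · rintro ⟨d, hd, hp⟩
      obtain ⟨h1, h2⟩ := (mem_Mset F).mp hp
      rw [Finset.mem_range] at hd
      exact ⟨h1, by omega⟩
    · rintro ⟨h1, h2⟩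
      exact ⟨p.natDegree, Finset.mem_range.mpr (by omega), (mem_Mset F).mpr ⟨h1, rfl⟩⟩
  set P : Finset (Fin k → Polynomial F) := Fintype.piFinset (fun _ => U) with hP
  set B : Finset (Fin k → Polynomial F) := P.filter (fun t => ∏ i, t i ∈ Mset F n) with hB
  set D : Finset (Fin k → ℕ) :=
    (Fintype.piFinset (fun _ : Fin k => Finset.range (n + 1))).filter
      (fun e => ∑ i, e i = n) with hD
  -- dpoly as a card of a fiber
  have hdp : ∀ f ∈ Mset F n, (dpoly F k f : ℂ) * χ (Ideal.Quotient.mk (Tpow F (n - h)) f)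
      = ∑ t ∈ B.filter (fun t => ∏ i, t i = f),
          χ (Ideal.Quotient.mk (Tpow F (n - h)) (∏ i, t i)) := by
    intro f hf
    have hcard : dpoly F k f = (B.filter (fun t => ∏ i, t i = f)).card := by
      rw [dpoly, ← Set.ncard_coe_finset]
      congr 1
      ext t
      simp only [Set.mem_setOf_eq, Finset.coe_filter, hB, hP, Finset.mem_filter,
        Fintype.mem_piFinset]
      constructor
      · rintro ⟨hmon, hprod⟩
        have hdeg : ∑ i, (t i).natDegree = n := by
          rw [← Polynomial.natDegree_prod _ _ (fun i _ => (hmon i).ne_zero), hprod]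
          exact ((mem_Mset F).mp hf).2
        refine ⟨⟨fun i => (mem_U (t i)).mpr ⟨hmon i, ?_⟩, hprod ▸ hf⟩, hprod⟩
        calc (t i).natDegree ≤ ∑ j, (t j).natDegree :=
              Finset.single_le_sum (f := fun j => (t j).natDegree)
                (fun j _ => Nat.zero_le _) (Finset.mem_univ i)
          _ = n := hdeg
      · rintro ⟨⟨hP', -⟩, hprod⟩
        exact ⟨fun i => ((mem_U (t i)).mp (hP' i)).1, hprod⟩
    rw [hcard,
      Finset.sum_congr rfl (fun t ht => by rw [(Finset.mem_filter.mp ht).2]),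
      Finset.sum_const, nsmul_eq_mul]
  have hmapsD : ∀ t ∈ B, (fun i => (t i).natDegree) ∈ D := by
    intro t ht
    obtain ⟨htP, htp⟩ := Finset.mem_filter.mp ht
    rw [hP, Fintype.mem_piFinset] at htP
    have hmon : ∀ i, (t i).Monic := fun i => ((mem_U (t i)).mp (htP i)).1
    rw [hD, Finset.mem_filter, Fintype.mem_piFinset]
    constructor
    · intro i
      rw [Finset.mem_range]
      have := ((mem_U (t i)).mp (htP i)).2
      omega
    · rw [← Polynomial.natDegree_prod _ _ (fun i _ => (hmon i).ne_zero)]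
      exact ((mem_Mset F).mp htp).2
  have hfactor : ∀ e ∈ D,
      ∑ t ∈ B.filter (fun t => (fun i => (t i).natDegree) = e),
          χ (Ideal.Quotient.mk (Tpow F (n - h)) (∏ i, t i))
        = ∏ i, ∑ p ∈ Mset F (e i), χ (Ideal.Quotient.mk (Tpow F (n - h)) p) := by
    intro e he
    obtain ⟨helt, hesum⟩ := Finset.mem_filter.mp he
    rw [Fintype.mem_piFinset] at helt
    have hfib : B.filter (fun t => (fun i => (t i).natDegree) = e)
        = Fintype.piFinset (fun i => Mset F (e i)) := by
      ext t
      rw [Finset.mem_filter, hB, Finset.mem_filter, hP, Fintype.mem_piFinset,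
        Fintype.mem_piFinset, funext_iff]
      constructor
      · rintro ⟨⟨hU', -⟩, hdegs⟩
        intro i
        exact (mem_Mset F).mpr ⟨((mem_U (t i)).mp (hU' i)).1, hdegs i⟩
      · intro ht
        have hmon : ∀ i, (t i).Monic := fun i => ((mem_Mset F).mp (ht i)).1
        have hdegs : ∀ i, (t i).natDegree = e i := fun i => ((mem_Mset F).mp (ht i)).2
        refine ⟨⟨fun i => (mem_U (t i)).mpr ⟨hmon i, ?_⟩, ?_⟩, hdegs⟩
        · have := Finset.mem_range.mp (helt i)
          rw [hdegs i]; omega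
        · refine (mem_Mset F).mpr ⟨monic_prod_of_monic _ _ (fun i _ => hmon i), ?_⟩
          rw [Polynomial.natDegree_prod _ _ (fun i _ => (hmon i).ne_zero)]
          rw [Finset.sum_congr rfl (fun i _ => hdegs i)]
          exact hesum
    rw [hfib,
      Finset.sum_congr rfl (fun t _ => by
        rw [map_prod (Ideal.Quotient.mk (Tpow F (n - h))) t Finset.univ,
          map_prod χ (fun i => Ideal.Quotient.mk (Tpow F (n - h)) (t i)) Finset.univ])]
    exact (Finset.prod_univ_sum (fun i => Mset F (e i))
      (fun _ p => χ (Ideal.Quotient.mk (Tpow F (n - h)) p))).symm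
  have hzero : ∀ e ∈ D,
      ∏ i, ∑ p ∈ Mset F (e i), χ (Ideal.Quotient.mk (Tpow F (n - h)) p) = 0 := by
    intro e he
    obtain ⟨-, hesum⟩ := Finset.mem_filter.mp he
    have hex : ∃ i, n - h ≤ e i := by
      by_contra hcon
      push_neg at hcon
      have hle : ∑ i, e i ≤ k * (n - h - 1) := by
        calc ∑ i, e i ≤ ∑ _i : Fin k, (n - h - 1) :=
              Finset.sum_le_sum (fun i _ => by have := hcon i; omega)
          _ = k * (n - h - 1) := by
              rw [Finset.sum_const, Finset.card_univ, Fintype.card_fin, smul_eq_mul]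
      omega
    obtain ⟨i₀, hi₀⟩ := hex
    exact Finset.prod_eq_zero (Finset.mem_univ i₀) (sum_Mset_char F χ hχ1 hi₀)
  calc ∑ f ∈ Mset F n, (dpoly F k f : ℂ) * χ (Ideal.Quotient.mk (Tpow F (n - h)) f)
      = ∑ f ∈ Mset F n, ∑ t ∈ B.filter (fun t => ∏ i, t i = f),
          χ (Ideal.Quotient.mk (Tpow F (n - h)) (∏ i, t i)) := Finset.sum_congr rfl hdp
    _ = ∑ t ∈ B, χ (Ideal.Quotient.mk (Tpow F (n - h)) (∏ i, t i)) :=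
        Finset.sum_fiberwise_of_maps_to (fun t ht => (Finset.mem_filter.mp ht).2) _
    _ = ∑ e ∈ D, ∑ t ∈ B.filter (fun t => (fun i => (t i).natDegree) = e),
          χ (Ideal.Quotient.mk (Tpow F (n - h)) (∏ i, t i)) :=
        (Finset.sum_fiberwise_of_maps_to hmapsD _).symm
    _ = ∑ e ∈ D, ∏ i, ∑ p ∈ Mset F (e i), χ (Ideal.Quotient.mk (Tpow F (n - h)) p) :=
        Finset.sum_congr rfl hfactor
    _ = 0 := Finset.sum_eq_zero hzero
end
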